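/- arXiv:math/0608491 — 4 statements merged into one kernel-verified Lean document; each statement's English description precedes it below -/
import Mathlib

section
/- For every field k and every integer n ≥ 1, the prime spectrum of R_n(k) is a connected topological space (equivalently, R_n(k) is a nonzero ring whose only idempotents are 0 and 1). -/
set_option maxHeartbeats 1000000
set_option synthInstance.maxHeartbeats 200000

open MvPolynomial in
/-- The defining relations of the moduli space of based rank-`n` algebras:
commutativity `c_{ijl} - c_{jil}`, associativity
`Σ_m c_{ijm} c_{mkl} - Σ_m c_{jkm} c_{iml}`, and the unit relations
`Σ_i d_i c_{ijl} - δ_{jl}`.  The variable `Sum.inl (i,j,l)` is `c_{ijl}` and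
`Sum.inr i` is `d_i`. -/
def structRels (k : Type) [CommRing k] (n : ℕ) :
    Set (MvPolynomial ((Fin n × Fin n × Fin n) ⊕ Fin n) k) :=
  (Set.range fun t : Fin n × Fin n × Fin n =>
      (X (Sum.inl (t.1, t.2.1, t.2.2)) : MvPolynomial ((Fin n × Fin n × Fin n) ⊕ Fin n) k)
        - X (Sum.inl (t.2.1, t.1, t.2.2)))
  ∪ (Set.range fun t : Fin n × Fin n × Fin n × Fin n =>
      (∑ m : Fin n, X (Sum.inl (t.1, t.2.1, m)) * X (Sum.inl (m, t.2.2.1, t.2.2.2)))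
        - ∑ m : Fin n, X (Sum.inl (t.2.1, t.2.2.1, m)) * X (Sum.inl (t.1, m, t.2.2.2)))
  ∪ (Set.range fun t : Fin n × Fin n =>
      (∑ i : Fin n, X (Sum.inr i) * X (Sum.inl (i, t.1, t.2)))
        - if t.1 = t.2 then 1 else 0)

/-- `Rring k n` is the coordinate ring of the moduli space `B_{n,k}` of based
rank-`n` algebras: the polynomial ring in the `n^3 + n` variables `c_{ijl}`, `d_i`
modulo the commutativity, associativity and unit relations. -/
abbrev Rring (k : Type) [CommRing k] (n : ℕ) : Type :=
  MvPolynomial ((Fin n × Fin n × Fin n) ⊕ Fin n) k ⧸ Ideal.span (structRels k n)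


namespace StmtAux

variable {n : ℕ} {S T : Type*} [CommRing S] [CommRing T]

/-- The relations, as concrete equations on a family of "structure constants". -/
def Rels (n : ℕ) (dat : ((Fin n × Fin n × Fin n) ⊕ Fin n) → S) : Prop :=
  (∀ i j l, dat (Sum.inl (i,j,l)) = dat (Sum.inl (j,i,l))) ∧
  (∀ i j k l : Fin n, ∑ m : Fin n, dat (Sum.inl (i,j,m)) * dat (Sum.inl (m,k,l))
      = ∑ m : Fin n, dat (Sum.inl (j,k,m)) * dat (Sum.inl (i,m,l))) ∧
  (∀ j l : Fin n, ∑ i : Fin n, dat (Sum.inr i) * dat (Sum.inl (i,j,l))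
      = if j = l then 1 else 0)

lemma rels_comp (f : S →+* T) {dat : ((Fin n × Fin n × Fin n) ⊕ Fin n) → S}
    (h : Rels n dat) : Rels n (f ∘ dat) := by
  obtain ⟨h1, h2, h3⟩ := h
  refine ⟨fun i j l => by simp [h1 i j l], fun i j k l => ?_, fun j l => ?_⟩
  · have := congrArg f (h2 i j k l)
    simpa [map_sum, map_mul] using this
  · have := congrArg f (h3 j l)
    simpa [map_sum, map_mul, apply_ite f] using this

lemma rels_of_comp (f : S →+* T) (hf : Function.Injective f)
    {dat : ((Fin n × Fin n × Fin n) ⊕ Fin n) → S}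
    (h : Rels n (f ∘ dat)) : Rels n dat := by
  obtain ⟨h1, h2, h3⟩ := h
  refine ⟨fun i j l => hf (h1 i j l), fun i j k l => hf ?_, fun j l => hf ?_⟩
  · have := h2 i j k l
    simpa [map_sum, map_mul] using this
  · have := h3 j l
    simpa [map_sum, map_mul, apply_ite f] using this

variable (k : Type) [CommRing k]

open MvPolynomial in
/-- The ring hom `Rring k n →+* S` determined by structure-constant data
satisfying the relations. -/
noncomputable def mkHom (f₀ : k →+* S) (dat : ((Fin n × Fin n × Fin n) ⊕ Fin n) → S)
    (h : Rels n dat) : Rring k n →+* S :=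
  Ideal.Quotient.lift _ (eval₂Hom f₀ dat) (by
    intro a ha
    rw [← RingHom.mem_ker]
    refine Ideal.span_le.2 ?_ ha
    rintro P ((⟨t, rfl⟩ | ⟨t, rfl⟩) | ⟨t, rfl⟩) <;>
      simp only [SetLike.mem_coe, RingHom.mem_ker, map_sub, map_sum, map_mul,
        eval₂Hom_X', sub_eq_zero]
    · exact h.1 t.1 t.2.1 t.2.2
    · exact h.2.1 t.1 t.2.1 t.2.2.1 t.2.2.2
    · rw [h.2.2 t.1 t.2]; split <;> simp)

open MvPolynomial in
@[simp] lemma mkHom_mk_X (f₀ : k →+* S) (dat) (h : Rels n dat) (v) :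
    mkHom k f₀ dat h (Ideal.Quotient.mk _ (X v)) = dat v := by
  simp [mkHom]

open MvPolynomial in
@[simp] lemma mkHom_mk_C (f₀ : k →+* S) (dat) (h : Rels n dat) (a : k) :
    mkHom k f₀ dat h (Ideal.Quotient.mk _ (C a)) = f₀ a := by
  simp [mkHom]

open MvPolynomial in
lemma hom_ext {Φ Ψ : Rring k n →+* T}
    (hC : ∀ a : k, Φ (Ideal.Quotient.mk _ (C a)) = Ψ (Ideal.Quotient.mk _ (C a)))
    (hX : ∀ v, Φ (Ideal.Quotient.mk _ (X v)) = Ψ (Ideal.Quotient.mk _ (X v))) : Φ = Ψ := by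
  refine Ideal.Quotient.ringHom_ext (MvPolynomial.ringHom_ext (fun r => ?_) (fun v => ?_))
  · simpa using hC r
  · simpa using hX v

open MvPolynomial in
/-- The tautological data over `Rring k n` satisfies the relations. -/
lemma rels_taut : Rels n (fun v => (Ideal.Quotient.mk (Ideal.span (structRels k n)) (X v))) := by
  have key : ∀ P ∈ structRels k n, Ideal.Quotient.mk (Ideal.span (structRels k n)) P = 0 :=
    fun P hP => Ideal.Quotient.eq_zero_iff_mem.2 (Ideal.subset_span hP)
  refine ⟨fun i j l => ?_, fun i j k' l => ?_, fun j l => ?_⟩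
  · have := key _ (Or.inl (Or.inl ⟨(i,j,l), rfl⟩))
    simpa [map_sub, sub_eq_zero] using this
  · have := key _ (Or.inl (Or.inr ⟨(i,j,k',l), rfl⟩))
    simpa [map_sub, map_sum, map_mul, sub_eq_zero] using this
  · have := key _ (Or.inr ⟨(j,l), rfl⟩)
    simp only [map_sub, map_sum, map_mul, sub_eq_zero] at this
    rw [this]; split <;> simp

end StmtAux

namespace StmtAux

variable {n : ℕ} {S T : Type*} [CommRing S] [CommRing T]

/-- The "multiplication by `e_i`" matrix of a data family. -/
def Lm (dat : ((Fin n × Fin n × Fin n) ⊕ Fin n) → S) (i : Fin n) :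
    Matrix (Fin n) (Fin n) S :=
  Matrix.of fun j l => dat (Sum.inl (i,j,l))

def Dv (dat : ((Fin n × Fin n × Fin n) ⊕ Fin n) → S) : Fin n → S :=
  fun i => dat (Sum.inr i)

omit [CommRing S] in
lemma Lm_apply (dat : ((Fin n × Fin n × Fin n) ⊕ Fin n) → S) (i j l : Fin n) :
    Lm dat i j l = dat (Sum.inl (i,j,l)) := rfl

/-- matrix form of relations -/
def MRels (dat : ((Fin n × Fin n × Fin n) ⊕ Fin n) → S) : Prop :=
  (∀ i j l, dat (Sum.inl (i,j,l)) = dat (Sum.inl (j,i,l))) ∧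
  (∀ i k, Lm dat i * Lm dat k = Lm dat k * Lm dat i) ∧
  ((∑ i : Fin n, Dv dat i • Lm dat i) = 1)

lemma rels_iff_mrels (dat : ((Fin n × Fin n × Fin n) ⊕ Fin n) → S) :
    Rels n dat ↔ MRels dat := by
  constructor
  · rintro ⟨h1, h2, h3⟩
    refine ⟨h1, fun i k' => ?_, ?_⟩
    · ext j l
      simp only [Matrix.mul_apply, Lm_apply]
      calc ∑ m, dat (Sum.inl (i,j,m)) * dat (Sum.inl (k',m,l))
          = ∑ m, dat (Sum.inl (i,j,m)) * dat (Sum.inl (m,k',l)) := by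
            refine Finset.sum_congr rfl fun m _ => by rw [h1 k' m l]
        _ = ∑ m, dat (Sum.inl (j,k',m)) * dat (Sum.inl (i,m,l)) := h2 i j k' l
        _ = ∑ m, dat (Sum.inl (k',j,m)) * dat (Sum.inl (i,m,l)) := by
            refine Finset.sum_congr rfl fun m _ => by rw [h1 j k' m]
    · ext j l
      simp only [Matrix.sum_apply, Matrix.smul_apply, Lm_apply, smul_eq_mul, Matrix.one_apply]
      simpa [Dv] using h3 j l
  · rintro ⟨h1, h2, h3⟩
    refine ⟨h1, fun i j k' l => ?_, fun j l => ?_⟩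
    · have hm := congrFun (congrFun (h2 i k') j) l
      simp only [Matrix.mul_apply, Lm_apply] at hm
      calc ∑ m, dat (Sum.inl (i,j,m)) * dat (Sum.inl (m,k',l))
          = ∑ m, dat (Sum.inl (i,j,m)) * dat (Sum.inl (k',m,l)) := by
            refine Finset.sum_congr rfl fun m _ => by rw [h1 k' m l]
        _ = ∑ m, dat (Sum.inl (k',j,m)) * dat (Sum.inl (i,m,l)) := hm
        _ = ∑ m, dat (Sum.inl (j,k',m)) * dat (Sum.inl (i,m,l)) := by
            refine Finset.sum_congr rfl fun m _ => by rw [h1 j k' m]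
    · have hm := congrFun (congrFun h3 j) l
      simpa [Matrix.sum_apply, Lm_apply, Dv, Matrix.one_apply] using hm

/-- Base change of structure-constant data by a matrix `M` with (two-sided) inverse `N`. -/
def bcDat (M N : Matrix (Fin n) (Fin n) S)
    (dat : ((Fin n × Fin n × Fin n) ⊕ Fin n) → S) :
    ((Fin n × Fin n × Fin n) ⊕ Fin n) → S
  | Sum.inl (i,j,l) => (M * (∑ a : Fin n, M i a • Lm dat a) * N) j l
  | Sum.inr i => Matrix.vecMul (Dv dat) N i

lemma Lm_bcDat (M N : Matrix (Fin n) (Fin n) S) (dat) (i : Fin n) :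
    Lm (bcDat M N dat) i = M * (∑ a : Fin n, M i a • Lm dat a) * N := by
  ext j l; rfl

lemma Dv_bcDat (M N : Matrix (Fin n) (Fin n) S) (dat) :
    Dv (bcDat M N dat) = Matrix.vecMul (Dv dat) N := by
  ext i; rfl

lemma rels_bcDat {M N : Matrix (Fin n) (Fin n) S} (hMN : M * N = 1) (hNM : N * M = 1)
    {dat : ((Fin n × Fin n × Fin n) ⊕ Fin n) → S} (h : Rels n dat) :
    Rels n (bcDat M N dat) := by
  rw [rels_iff_mrels] at h ⊢
  obtain ⟨h1, h2, h3⟩ := h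
  have collapse : ∀ A B : Matrix (Fin n) (Fin n) S, (M*A*N)*(M*B*N) = M*(A*B)*N := by
    intro A B
    simp only [Matrix.mul_assoc]
    rw [← Matrix.mul_assoc N M (B*N), hNM, Matrix.one_mul]
  have key_sym : ∀ i j r : Fin n,
      (M * (∑ a : Fin n, M i a • Lm dat a)) j r
        = (M * (∑ a : Fin n, M j a • Lm dat a)) i r := by
    intro i j r
    simp only [Matrix.mul_apply, Matrix.sum_apply, Matrix.smul_apply, Lm_apply, smul_eq_mul,
      Finset.mul_sum]
    rw [Finset.sum_comm]
    refine Finset.sum_congr rfl fun a _ => Finset.sum_congr rfl fun b _ => ?_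
    rw [h1 a b r]; ring
  refine ⟨?_, fun i k' => ?_, ?_⟩
  · -- symmetry
    intro i j l
    show (M * (∑ a : Fin n, M i a • Lm dat a) * N) j l
        = (M * (∑ a : Fin n, M j a • Lm dat a) * N) i l
    rw [Matrix.mul_apply, Matrix.mul_apply]
    exact Finset.sum_congr rfl fun r _ => by rw [key_sym i j r]
  · -- commuting
    rw [Lm_bcDat, Lm_bcDat, collapse, collapse]
    have comm : (∑ a : Fin n, M i a • Lm dat a) * (∑ b : Fin n, M k' b • Lm dat b)
        = (∑ b : Fin n, M k' b • Lm dat b) * (∑ a : Fin n, M i a • Lm dat a) := by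
      rw [Finset.sum_mul_sum, Finset.sum_mul_sum, Finset.sum_comm]
      refine Finset.sum_congr rfl fun b _ => Finset.sum_congr rfl fun a _ => ?_
      simp only [Matrix.smul_mul, Matrix.mul_smul]
      rw [h2 a b, smul_comm]
    rw [comm]
  · -- unit
    have hLB : ∀ i : Fin n, Lm (bcDat M N dat) i
        = M * (∑ a : Fin n, M i a • Lm dat a) * N := Lm_bcDat M N dat
    rw [Dv_bcDat]
    calc (∑ i : Fin n, Matrix.vecMul (Dv dat) N i • Lm (bcDat M N dat) i)
        = M * (∑ i : Fin n, Matrix.vecMul (Dv dat) N i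
            • ∑ a : Fin n, M i a • Lm dat a) * N := by
          rw [Finset.mul_sum, Finset.sum_mul]
          refine Finset.sum_congr rfl fun i _ => ?_
          rw [hLB i]
          simp only [Matrix.mul_smul, Matrix.smul_mul]
      _ = M * (∑ a : Fin n, Dv dat a • Lm dat a) * N := by
          congr 2
          have e1 : ∀ i : Fin n, (Matrix.vecMul (Dv dat) N i • ∑ a : Fin n, M i a • Lm dat a)
              = ∑ a : Fin n, (Matrix.vecMul (Dv dat) N i * M i a) • Lm dat a := by
            intro i
            rw [Finset.smul_sum]
            exact Finset.sum_congr rfl fun a _ => by rw [smul_smul]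
          simp_rw [e1]
          rw [Finset.sum_comm]
          refine Finset.sum_congr rfl fun a _ => ?_
          rw [← Finset.sum_smul]
          congr 1
          have e2 : (∑ i, Matrix.vecMul (Dv dat) N i * M i a)
              = Matrix.vecMul (Matrix.vecMul (Dv dat) N) M a := by
            simp [Matrix.vecMul, dotProduct]
          rw [e2, Matrix.vecMul_vecMul, hNM, Matrix.vecMul_one]
      _ = 1 := by rw [h3, Matrix.mul_one, hMN]

end StmtAux

namespace StmtAux

variable {n : ℕ} {S T : Type*} [CommRing S] [CommRing T]

lemma bcDat_comp (f : S →+* T) (M N : Matrix (Fin n) (Fin n) S)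
    (dat : ((Fin n × Fin n × Fin n) ⊕ Fin n) → S) :
    f ∘ bcDat M N dat = bcDat (M.map f) (N.map f) (f ∘ dat) := by
  funext v
  match v with
  | Sum.inl (i,j,l) =>
    show f ((M * (∑ a : Fin n, M i a • Lm dat a) * N) j l) = _
    simp only [bcDat, Matrix.mul_apply, Matrix.sum_apply, Matrix.smul_apply, Lm_apply,
      smul_eq_mul, map_sum, map_mul, Matrix.map_apply, Function.comp_apply]
  | Sum.inr i =>
    show f (Matrix.vecMul (Dv dat) N i) = _
    simp only [bcDat, Matrix.vecMul, dotProduct, map_sum, map_mul, Dv,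
      Matrix.map_apply, Function.comp_apply]

lemma bcDat_one (dat : ((Fin n × Fin n × Fin n) ⊕ Fin n) → S) :
    bcDat (1 : Matrix (Fin n) (Fin n) S) 1 dat = dat := by
  funext v
  match v with
  | Sum.inl (i,j,l) =>
    show (((1 : Matrix (Fin n) (Fin n) S) * (∑ a : Fin n, (1 : Matrix (Fin n) (Fin n) S) i a
        • Lm dat a) * 1 : Matrix (Fin n) (Fin n) S)) j l = _
    rw [Matrix.mul_one, Matrix.one_mul]
    have : (∑ a : Fin n, (1 : Matrix (Fin n) (Fin n) S) i a • Lm dat a) = Lm dat i := by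
      rw [Finset.sum_eq_single i]
      · rw [Matrix.one_apply_eq, one_smul]
      · intro b _ hb
        rw [Matrix.one_apply_ne (Ne.symm hb), zero_smul]
      · intro hi; exact absurd (Finset.mem_univ i) hi
    rw [this, Lm_apply]
  | Sum.inr i =>
    show Matrix.vecMul (Dv dat) (1 : Matrix (Fin n) (Fin n) S) i = _
    rw [Matrix.vecMul_one]; rfl

end StmtAux

namespace StmtAux

variable {n : ℕ} {K : Type*} [Field K]

section Fmat
variable [NeZero n] (u : Fin n → K) (i₀ : Fin n)

/-- Matrix whose row `0` is `u` and whose other rows are the standard basis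
vectors, skipping `i₀` (via the swap `(0 i₀)`). -/
def Fmat : Matrix (Fin n) (Fin n) K :=
  Matrix.of fun j a => if j = 0 then u a else if Equiv.swap (0 : Fin n) i₀ j = a then 1 else 0

/-- Explicit inverse of `Fmat`. -/
def NFmat : Matrix (Fin n) (Fin n) K :=
  Matrix.of fun a l => if a = i₀ then
      (if l = 0 then (u i₀)⁻¹ else -((u i₀)⁻¹ * u (Equiv.swap (0 : Fin n) i₀ l)))
    else (if Equiv.swap (0 : Fin n) i₀ a = l then 1 else 0)

variable {u i₀}

lemma Fmat_zero (a : Fin n) : Fmat u i₀ 0 a = u a := by simp [Fmat]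

lemma Fmat_mul_NFmat (hu : u i₀ ≠ 0) : Fmat u i₀ * NFmat u i₀ = 1 := by
  set σ := Equiv.swap (0 : Fin n) i₀ with hσ
  have hσ0 : σ 0 = i₀ := Equiv.swap_apply_left 0 i₀
  have hσi : σ i₀ = 0 := Equiv.swap_apply_right 0 i₀
  have hσσ : ∀ x, σ (σ x) = x := fun x => Equiv.swap_apply_self 0 i₀ x
  ext j m
  rw [Matrix.mul_apply, Matrix.one_apply]
  by_cases hj : j = 0
  · subst hj
    rw [← Finset.add_sum_erase Finset.univ _ (Finset.mem_univ i₀)]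
    by_cases hm : m = 0
    · subst hm
      have hz : ∀ a ∈ Finset.univ.erase i₀, Fmat u i₀ 0 a * NFmat u i₀ a 0 = 0 := by
        intro a ha
        have hai : a ≠ i₀ := Finset.ne_of_mem_erase ha
        have hne : σ a ≠ 0 := fun h => hai (by
          have := congrArg σ h; rwa [hσσ, hσ0] at this)
        simp only [← hσ, NFmat, Matrix.of_apply, if_neg hai, if_neg hne, mul_zero]
      rw [Finset.sum_eq_zero hz, add_zero, if_pos rfl]
      simp only [Fmat, NFmat, Matrix.of_apply, if_pos rfl]
      exact mul_inv_cancel₀ hu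
    · have hσm : σ m ≠ i₀ := fun h => hm (by
        have := congrArg σ h; rwa [hσσ, hσi] at this)
      have hmem : σ m ∈ Finset.univ.erase i₀ := Finset.mem_erase.2 ⟨hσm, Finset.mem_univ _⟩
      rw [Finset.sum_eq_single_of_mem (σ m) hmem (fun a ha hne => by
        have hai : a ≠ i₀ := Finset.ne_of_mem_erase ha
        have hone : σ a ≠ m := fun h => hne (by
          have := congrArg σ h; rwa [hσσ] at this)
        simp only [← hσ, NFmat, Matrix.of_apply, if_neg hai, if_neg hone, mul_zero])]
      rw [if_neg (Ne.symm hm)]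
      simp only [Fmat, NFmat, Matrix.of_apply, if_pos rfl, if_neg hσm, hσσ, if_neg hm]
      simp only [↓reduceIte, ← hσ, hσσ]
      field_simp
      ring
  · rw [Finset.sum_eq_single_of_mem (σ j) (Finset.mem_univ _) (fun a _ hne => by
      simp only [← hσ, Fmat, Matrix.of_apply, if_neg hj, if_neg (fun h => hne h.symm : ¬ σ j = a),
        zero_mul])]
    have hji : σ j ≠ i₀ := fun h => hj (by
      have := congrArg σ h; rwa [hσσ, hσi] at this)
    simp only [← hσ, Fmat, NFmat, Matrix.of_apply, if_neg hj, if_pos rfl, one_mul, if_neg hji, hσσ]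
    simp

lemma NFmat_mul_Fmat (hu : u i₀ ≠ 0) : NFmat u i₀ * Fmat u i₀ = 1 := by
  set σ := Equiv.swap (0 : Fin n) i₀ with hσ
  have hσ0 : σ 0 = i₀ := Equiv.swap_apply_left 0 i₀
  have hσi : σ i₀ = 0 := Equiv.swap_apply_right 0 i₀
  have hσσ : ∀ x, σ (σ x) = x := fun x => Equiv.swap_apply_self 0 i₀ x
  ext a m
  rw [Matrix.mul_apply, Matrix.one_apply]
  by_cases ha : a = i₀
  · subst ha
    rw [← Finset.add_sum_erase Finset.univ _ (Finset.mem_univ (0 : Fin n))]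
    by_cases hm : m = a
    · subst hm
      have hz : ∀ l ∈ Finset.univ.erase (0 : Fin n),
          NFmat u m m l * Fmat u m l m = 0 := by
        intro l hl
        have hl0 : l ≠ 0 := Finset.ne_of_mem_erase hl
        have hne : σ l ≠ m := fun h => hl0 (by
          have := congrArg σ h; rwa [hσσ, hσi] at this)
        simp only [← hσ, Fmat, Matrix.of_apply, if_neg hl0, if_neg hne, mul_zero]
      rw [Finset.sum_eq_zero hz, add_zero, if_pos rfl]
      simp only [Fmat, NFmat, Matrix.of_apply, if_pos rfl]
      exact inv_mul_cancel₀ hu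
    · have hσm : σ m ≠ 0 := fun h => hm (by
        have := congrArg σ h; rwa [hσσ, hσ0] at this)
      have hmem : σ m ∈ Finset.univ.erase (0 : Fin n) :=
        Finset.mem_erase.2 ⟨hσm, Finset.mem_univ _⟩
      rw [Finset.sum_eq_single_of_mem (σ m) hmem (fun l hl hne => by
        have hl0 : l ≠ 0 := Finset.ne_of_mem_erase hl
        have hone : σ l ≠ m := fun h => hne (by
          have := congrArg σ h; rwa [hσσ] at this)
        simp only [← hσ, Fmat, Matrix.of_apply, if_neg hl0, if_neg hone, mul_zero])]
      rw [if_neg (fun h => hm h.symm)]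
      simp only [Fmat, NFmat, Matrix.of_apply, if_pos rfl, if_neg hσm, hσσ, if_pos rfl]
      simp only [↓reduceIte, ← hσ, hσσ]
      field_simp
      ring
  · rw [Finset.sum_eq_single_of_mem (σ a) (Finset.mem_univ _) (fun l _ hne => by
      simp only [← hσ, NFmat, Matrix.of_apply, if_neg ha, if_neg (fun h => hne h.symm : ¬ σ a = l),
        zero_mul])]
    have hσa : σ a ≠ 0 := fun h => ha (by
      have := congrArg σ h; rwa [hσσ, hσ0] at this)
    simp only [← hσ, Fmat, NFmat, Matrix.of_apply, if_neg ha, if_pos rfl, one_mul, if_neg hσa, hσσ]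
    simp

end Fmat
end StmtAux

namespace StmtAux

variable {n : ℕ} {S : Type*} [CommRing S]

lemma sum_delta_mul (f : Fin n → S) (b : Fin n) :
    (∑ i : Fin n, (if i = b then 1 else 0) * f i) = f b := by
  rw [Finset.sum_eq_single b (fun a _ ha => by rw [if_neg ha, zero_mul])
    (fun h => absurd (Finset.mem_univ b) h), if_pos rfl, one_mul]

lemma sum_delta'_mul (f : Fin n → S) (b : Fin n) :
    (∑ i : Fin n, (if b = i then 1 else 0) * f i) = f b := by
  rw [Finset.sum_eq_single b (fun a _ ha => by rw [if_neg (Ne.symm ha), zero_mul])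
    (fun h => absurd (Finset.mem_univ b) h), if_pos rfl, one_mul]

lemma sum_mul_delta (f : Fin n → S) (b : Fin n) :
    (∑ i : Fin n, f i * (if i = b then 1 else 0)) = f b := by
  rw [Finset.sum_eq_single b (fun a _ ha => by rw [if_neg ha, mul_zero])
    (fun h => absurd (Finset.mem_univ b) h), if_pos rfl, mul_one]

/-- structure constants of the square-zero algebra `S[x₁,…,x_{n-1}]/(x_ix_j)`,
in the basis `1, x₁, …, x_{n-1}`. -/
def zdat (n : ℕ) (S : Type*) [CommRing S] [NeZero n] :
    ((Fin n × Fin n × Fin n) ⊕ Fin n) → S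
  | Sum.inl (i,j,l) => if i = 0 then (if j = l then 1 else 0)
      else if j = 0 then (if i = l then 1 else 0) else 0
  | Sum.inr i => if i = 0 then 1 else 0

lemma rels_zdat [NeZero n] : Rels n (zdat n S) := by
  refine ⟨fun i j l => ?_, fun i j k l => ?_, fun j l => ?_⟩
  · by_cases hi : i = 0 <;> by_cases hj : j = 0 <;> simp [zdat, hi, hj]
  · by_cases hi : i = 0
    · subst hi
      have e1 : ∀ m : Fin n, zdat n S (Sum.inl (0,j,m)) = if j = m then 1 else 0 := by
        intro m; simp [zdat]
      have e2 : ∀ m : Fin n, zdat n S (Sum.inl (0,m,l)) = if m = l then 1 else 0 := by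
        intro m; simp [zdat]
      simp_rw [e1, e2]
      rw [sum_delta'_mul, sum_mul_delta]
    · by_cases hj : j = 0
      · subst hj
        have e1 : ∀ m : Fin n, zdat n S (Sum.inl (i,0,m)) = if i = m then 1 else 0 := by
          intro m; simp [zdat, hi]
        have e2 : ∀ m : Fin n, zdat n S (Sum.inl (0,k,m)) = if k = m then 1 else 0 := by
          intro m; simp [zdat]
        simp_rw [e1, e2]
        rw [sum_delta'_mul, sum_delta'_mul]
      · have e1 : ∀ m : Fin n, zdat n S (Sum.inl (i,j,m)) = 0 := by
          intro m; simp [zdat, hi, hj]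
        have e3 : ∀ m : Fin n, zdat n S (Sum.inl (j,k,m)) * zdat n S (Sum.inl (i,m,l)) = 0 := by
          intro m
          by_cases hm : m = 0
          · subst hm
            have : zdat n S (Sum.inl (j,k,0)) = 0 := by
              by_cases hk : k = 0 <;> simp [zdat, hj, hk]
            rw [this, zero_mul]
          · have : zdat n S (Sum.inl (i,m,l)) = 0 := by simp [zdat, hi, hm]
            rw [this, mul_zero]
        simp_rw [e1, e3]
        simp
  · have e0 : ∀ i : Fin n, zdat n S (Sum.inr i) = if i = 0 then 1 else 0 := fun i => rfl
    simp_rw [e0]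
    rw [sum_delta_mul]
    simp [zdat]

end StmtAux

namespace StmtAux

variable {n : ℕ} {S : Type*} [CommRing S] [NeZero n]

/-- The degeneration family: scale the non-unit basis vectors by `t`. -/
noncomputable def sdat (c : ((Fin n × Fin n × Fin n) ⊕ Fin n) → S) :
    ((Fin n × Fin n × Fin n) ⊕ Fin n) → Polynomial S
  | Sum.inl (i,j,l) => if i = 0 then (if j = l then 1 else 0)
      else if j = 0 then (if i = l then 1 else 0)
      else (if l = 0 then Polynomial.X^2 else Polynomial.X)
        * Polynomial.C (c (Sum.inl (i,j,l)))
  | Sum.inr i => if i = 0 then 1 else 0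

variable {c : ((Fin n × Fin n × Fin n) ⊕ Fin n) → S} (hc : Rels n c)
  (hD : ∀ i, c (Sum.inr i) = if i = 0 then 1 else 0)

section
include hc hD

lemma c_zero_fst (j l : Fin n) : c (Sum.inl (0,j,l)) = if j = l then 1 else 0 := by
  have h := hc.2.2 j l
  simp_rw [hD] at h
  rwa [sum_delta_mul (fun i => c (Sum.inl (i,j,l))) 0] at h

lemma c_zero_snd (i l : Fin n) : c (Sum.inl (i,0,l)) = if i = l then 1 else 0 := by
  rw [hc.1 i 0 l, c_zero_fst hc hD]

lemma rels_sdat : Rels n (sdat c) := by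
  have h0 := c_zero_fst hc hD
  have h0' := c_zero_snd hc hD
  have sd0 : ∀ j l : Fin n, sdat c (Sum.inl (0,j,l))
      = if j = l then 1 else 0 := by intro j l; simp [sdat]
  have sd0' : ∀ i l : Fin n, sdat c (Sum.inl (i,0,l))
      = if i = l then 1 else 0 := by
    intro i l
    by_cases hi : i = 0 <;> simp [sdat, hi]
  refine ⟨fun i j l => ?_, fun i j k l => ?_, fun j l => ?_⟩
  · by_cases hi : i = 0
    · subst hi; rw [sd0, sd0']
    · by_cases hj : j = 0
      · subst hj; rw [sd0, sd0']
      · simp only [sdat, if_neg hi, if_neg hj]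
        rw [hc.1 i j l]
  · by_cases hi : i = 0
    · subst hi
      simp_rw [sd0]
      rw [sum_delta'_mul, sum_mul_delta]
    · by_cases hj : j = 0
      · subst hj
        simp_rw [sd0', sd0]
        rw [sum_delta'_mul, sum_delta'_mul]
      · by_cases hk : k = 0
        · subst hk
          simp_rw [sd0']
          rw [sum_mul_delta, sum_delta'_mul]
        · -- all of i, j, k nonzero
          set e : Polynomial S := if l = 0 then Polynomial.X^2 else Polynomial.X with he
          have tm : ∀ a b : S, (Polynomial.X * Polynomial.C a) * (e * Polynomial.C b)
              = (Polynomial.X * e) * Polynomial.C (a*b) := by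
            intro a b; rw [Polynomial.C_mul]; ring
          have sde : ∀ i' j' : Fin n, i' ≠ 0 → j' ≠ 0 → sdat c (Sum.inl (i',j',l))
              = e * Polynomial.C (c (Sum.inl (i',j',l))) := by
            intro i' j' h1 h2; simp only [sdat, if_neg h1, if_neg h2, he]
          have sdm : ∀ i' j' : Fin n, i' ≠ 0 → j' ≠ 0 → ∀ m : Fin n, m ≠ 0 →
              sdat c (Sum.inl (i',j',m))
              = Polynomial.X * Polynomial.C (c (Sum.inl (i',j',m))) := by
            intro i' j' h1 h2 m hm; simp only [sdat, if_neg h1, if_neg h2, if_neg hm]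
          have sdz : ∀ i' j' : Fin n, i' ≠ 0 → j' ≠ 0 → sdat c (Sum.inl (i',j',0))
              = Polynomial.X^2 * Polynomial.C (c (Sum.inl (i',j',0))) := by
            intro i' j' h1 h2
            simp only [sdat, if_neg h1, if_neg h2]
            simp
          -- split both sides at m = 0
          rw [← Finset.add_sum_erase Finset.univ _ (Finset.mem_univ (0 : Fin n)),
            ← Finset.add_sum_erase Finset.univ
              (fun m => sdat c (Sum.inl (j,k,m)) * sdat c (Sum.inl (i,m,l)))
              (Finset.mem_univ (0 : Fin n))]
          have l1 : (∑ m ∈ Finset.univ.erase (0 : Fin n),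
              sdat c (Sum.inl (i,j,m)) * sdat c (Sum.inl (m,k,l)))
              = (Polynomial.X * e) * Polynomial.C (∑ m ∈ Finset.univ.erase (0 : Fin n),
                  c (Sum.inl (i,j,m)) * c (Sum.inl (m,k,l))) := by
            rw [map_sum, Finset.mul_sum]
            refine Finset.sum_congr rfl fun m hm => ?_
            have hm0 : m ≠ 0 := Finset.ne_of_mem_erase hm
            rw [sdm i j hi hj m hm0, sde m k hm0 hk, tm]
          have l2 : (∑ m ∈ Finset.univ.erase (0 : Fin n),
              sdat c (Sum.inl (j,k,m)) * sdat c (Sum.inl (i,m,l)))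
              = (Polynomial.X * e) * Polynomial.C (∑ m ∈ Finset.univ.erase (0 : Fin n),
                  c (Sum.inl (j,k,m)) * c (Sum.inl (i,m,l))) := by
            rw [map_sum, Finset.mul_sum]
            refine Finset.sum_congr rfl fun m hm => ?_
            have hm0 : m ≠ 0 := Finset.ne_of_mem_erase hm
            rw [sdm j k hj hk m hm0, sde i m hi hm0, tm]
          rw [l1, l2, sd0, sd0', sdz i j hi hj, sdz j k hj hk]
          -- the relation over S, split at m = 0
          have key := hc.2.1 i j k l
          rw [← Finset.add_sum_erase Finset.univ _ (Finset.mem_univ (0 : Fin n)),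
            ← Finset.add_sum_erase Finset.univ
              (fun m => c (Sum.inl (j,k,m)) * c (Sum.inl (i,m,l)))
              (Finset.mem_univ (0 : Fin n)), h0, h0'] at key
          by_cases hl : l = 0
          · subst hl
            rw [if_neg hk, if_neg hi] at key ⊢
            rw [mul_zero, zero_add, mul_zero, zero_add] at key
            rw [mul_zero, zero_add, mul_zero, zero_add, key]
          · have : e = Polynomial.X := if_neg hl
            rw [this]
            have ic : ∀ p : Prop, [Decidable p] → (if p then (1 : Polynomial S) else 0)
                = Polynomial.C (if p then (1 : S) else 0) := by
              intro p hp; split <;> simp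
            rw [ic, ic, show Polynomial.X^2 = Polynomial.X * Polynomial.X from sq Polynomial.X]
            calc Polynomial.X * Polynomial.X * Polynomial.C (c (Sum.inl (i,j,0)))
                  * Polynomial.C (if k = l then (1:S) else 0)
                + Polynomial.X * Polynomial.X
                  * Polynomial.C (∑ m ∈ Finset.univ.erase (0 : Fin n),
                      c (Sum.inl (i,j,m)) * c (Sum.inl (m,k,l)))
                = Polynomial.X * Polynomial.X
                  * Polynomial.C (c (Sum.inl (i,j,0)) * (if k = l then (1:S) else 0)
                    + ∑ m ∈ Finset.univ.erase (0 : Fin n),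
                      c (Sum.inl (i,j,m)) * c (Sum.inl (m,k,l))) := by
                  rw [map_add, Polynomial.C_mul]; ring
              _ = Polynomial.X * Polynomial.X
                  * Polynomial.C (c (Sum.inl (j,k,0)) * (if i = l then (1:S) else 0)
                    + ∑ m ∈ Finset.univ.erase (0 : Fin n),
                      c (Sum.inl (j,k,m)) * c (Sum.inl (i,m,l))) := by rw [key]
              _ = Polynomial.X * Polynomial.X * Polynomial.C (c (Sum.inl (j,k,0)))
                  * Polynomial.C (if i = l then (1:S) else 0)
                + Polynomial.X * Polynomial.X
                  * Polynomial.C (∑ m ∈ Finset.univ.erase (0 : Fin n),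
                      c (Sum.inl (j,k,m)) * c (Sum.inl (i,m,l))) := by
                  rw [map_add, Polynomial.C_mul]; ring
  · have e0 : ∀ i : Fin n, sdat c (Sum.inr i) = if i = 0 then 1 else 0 := fun i => rfl
    simp_rw [e0]
    rw [sum_delta_mul (fun i => sdat c (Sum.inl (i,j,l))) 0, sd0]

lemma sdat_eval_one (v) : Polynomial.evalRingHom (1 : S) (sdat c v) = c v := by
  have h0 := c_zero_fst hc hD
  have h0' := c_zero_snd hc hD
  match v with
  | Sum.inl (i,j,l) =>
    by_cases hi : i = 0
    · subst hi
      rw [show sdat c (Sum.inl ((0:Fin n),j,l)) = if j = l then 1 else 0 from by simp [sdat],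
        h0]
      split <;> simp
    · by_cases hj : j = 0
      · subst hj
        rw [show sdat c (Sum.inl (i,(0:Fin n),l)) = if i = l then 1 else 0 from by
          simp [sdat, hi], h0']
        split <;> simp
      · rw [show sdat c (Sum.inl (i,j,l)) = (if l = 0 then Polynomial.X^2 else Polynomial.X)
          * Polynomial.C (c (Sum.inl (i,j,l))) from by simp [sdat, hi, hj]]
        split <;> simp
  | Sum.inr i =>
    rw [show sdat c (Sum.inr i) = if i = 0 then 1 else 0 from rfl, hD]
    split <;> simp

lemma sdat_eval_zero (v) : Polynomial.evalRingHom (0 : S) (sdat c v) = zdat n S v := by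
  match v with
  | Sum.inl (i,j,l) =>
    by_cases hi : i = 0
    · subst hi
      rw [show sdat c (Sum.inl ((0:Fin n),j,l)) = if j = l then 1 else 0 from by simp [sdat],
        show zdat n S (Sum.inl ((0:Fin n),j,l)) = if j = l then 1 else 0 from by simp [zdat]]
      split <;> simp
    · by_cases hj : j = 0
      · subst hj
        rw [show sdat c (Sum.inl (i,(0:Fin n),l)) = if i = l then 1 else 0 from by
            simp [sdat, hi],
          show zdat n S (Sum.inl (i,(0:Fin n),l)) = if i = l then 1 else 0 from by
            simp [zdat, hi]]
        split <;> simp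
      · rw [show sdat c (Sum.inl (i,j,l)) = (if l = 0 then Polynomial.X^2 else Polynomial.X)
            * Polynomial.C (c (Sum.inl (i,j,l))) from by simp [sdat, hi, hj],
          show zdat n S (Sum.inl (i,j,l)) = 0 from by simp [zdat, hi, hj]]
        split <;> simp
  | Sum.inr i =>
    rw [show sdat c (Sum.inr i) = if i = 0 then 1 else 0 from rfl,
      show zdat n S (Sum.inr i) = if i = 0 then 1 else 0 from rfl]
    split <;> simp

end
end StmtAux

namespace StmtAux

/-- Two points of `Spec R` obtained as kernels of maps to domains factoring through a
common domain `S` lie in the same connected component. -/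
lemma point_mem_component {R S F₁ F₂ : Type*} [CommRing R] [CommRing S] [IsDomain S]
    [CommRing F₁] [IsDomain F₁] [CommRing F₂] [IsDomain F₂]
    (ψ : R →+* S) (g₁ : S →+* F₁) (g₂ : S →+* F₂) :
    (⟨RingHom.ker (g₁.comp ψ), RingHom.ker_isPrime _⟩ : PrimeSpectrum R) ∈
      connectedComponent
        (⟨RingHom.ker (g₂.comp ψ), RingHom.ker_isPrime _⟩ : PrimeSpectrum R) := by
  have himg : IsPreconnected (Set.range (PrimeSpectrum.comap ψ)) := by
    have h1 : IsIrreducible (Set.univ : Set (PrimeSpectrum S)) :=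
      IrreducibleSpace.isIrreducible_univ _
    have h2 := h1.image (PrimeSpectrum.comap ψ) (PrimeSpectrum.continuous_comap ψ).continuousOn
    rw [Set.image_univ] at h2
    exact h2.isConnected.isPreconnected
  have hmem1 : (⟨RingHom.ker (g₁.comp ψ), RingHom.ker_isPrime _⟩ : PrimeSpectrum R) ∈
      Set.range (PrimeSpectrum.comap ψ) := by
    refine ⟨⟨RingHom.ker g₁, RingHom.ker_isPrime _⟩, ?_⟩
    apply PrimeSpectrum.ext
    rw [PrimeSpectrum.comap_asIdeal]
    exact RingHom.comap_ker g₁ ψ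
  have hmem2 : (⟨RingHom.ker (g₂.comp ψ), RingHom.ker_isPrime _⟩ : PrimeSpectrum R) ∈
      Set.range (PrimeSpectrum.comap ψ) := by
    refine ⟨⟨RingHom.ker g₂, RingHom.ker_isPrime _⟩, ?_⟩
    apply PrimeSpectrum.ext
    rw [PrimeSpectrum.comap_asIdeal]
    exact RingHom.comap_ker g₂ ψ
  exact himg.subset_connectedComponent hmem2 hmem1

end StmtAux


open StmtAux in
/-- For every field `k` and every `n ≥ 1`, the prime spectrum of `R_n(k)` is a
connected topological space. -/
theorem stmt7 (k : Type) [Field k] (n : ℕ) (hn : 1 ≤ n) :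
    ConnectedSpace (PrimeSpectrum (Rring k n)) := by
  classical
  haveI : NeZero n := ⟨Nat.one_le_iff_ne_zero.mp hn⟩
  set R := Rring k n with hR
  -- the distinguished square-zero point over `k`
  let Φz : R →+* k := mkHom k (RingHom.id k) (zdat n k) rels_zdat
  let z : PrimeSpectrum R := ⟨RingHom.ker Φz, RingHom.ker_isPrime _⟩
  rw [connectedSpace_iff_connectedComponent]
  refine ⟨z, Set.eq_univ_iff_forall.2 fun x => ?_⟩
  -- setup: the residue field of x
  haveI hxp : x.asIdeal.IsPrime := x.2
  haveI : IsDomain (R ⧸ x.asIdeal) := Ideal.Quotient.isDomain _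
  set K := FractionRing (R ⧸ x.asIdeal) with hK
  let φ : R →+* K := algebraMap R K
  have hφa : ∀ a, φ a = (algebraMap (R ⧸ x.asIdeal) K) (Ideal.Quotient.mk x.asIdeal a) :=
    fun a => IsScalarTower.algebraMap_apply R (R ⧸ x.asIdeal) K a
  have hkerφ : RingHom.ker φ = x.asIdeal := by
    ext a
    rw [RingHom.mem_ker]
    constructor
    · intro h
      exact Ideal.Quotient.eq_zero_iff_mem.1 ((injective_iff_map_eq_zero _).1
        (IsFractionRing.injective (R ⧸ x.asIdeal) K) _ ((hφa a).symm.trans h))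
    · intro h
      have : Ideal.Quotient.mk x.asIdeal a = 0 := Ideal.Quotient.eq_zero_iff_mem.2 h
      rw [hφa, this, map_zero]
  let f₀ : k →+* K := φ.comp ((Ideal.Quotient.mk _).comp (MvPolynomial.C))
  let xdat := ⇑φ ∘ (fun v => Ideal.Quotient.mk (Ideal.span (structRels k n)) (MvPolynomial.X v))
  have hx : Rels n xdat := rels_comp φ (rels_taut k)
  have hφ : mkHom k f₀ xdat hx = φ := by
    refine hom_ext k (fun a => ?_) (fun v => ?_)
    · rw [mkHom_mk_C]; rfl
    · rw [mkHom_mk_X]; rfl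
  -- a coordinate of the identity that is nonzero
  set u : Fin n → K := fun i => xdat (Sum.inr i) with hu
  have hex : ∃ i₀, u i₀ ≠ 0 := by
    by_contra h
    push_neg at h
    have h00 := hx.2.2 0 0
    rw [if_pos rfl] at h00
    have : (∑ i : Fin n, xdat (Sum.inr i) * xdat (Sum.inl (i, 0, 0))) = 0 := by
      refine Finset.sum_eq_zero fun i _ => ?_
      rw [show xdat (Sum.inr i) = u i from rfl, h i, zero_mul]
    rw [this] at h00
    exact zero_ne_one h00
  obtain ⟨i₀, hi₀⟩ := hex
  have hFN := Fmat_mul_NFmat (u := u) (i₀ := i₀) hi₀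
  have hNF := NFmat_mul_Fmat (u := u) (i₀ := i₀) hi₀
  -- the point y : x base-changed so that the identity is the 0-th basis vector
  let ydat := bcDat (Fmat u i₀) (NFmat u i₀) xdat
  have hy : Rels n ydat := rels_bcDat hFN hNF hx
  have hyD : ∀ i, ydat (Sum.inr i) = if i = 0 then 1 else 0 := by
    intro i
    have e1 : ydat (Sum.inr i) = (Fmat u i₀ * NFmat u i₀) 0 i := by
      show Matrix.vecMul (Dv xdat) (NFmat u i₀) i = _
      rw [Matrix.mul_apply]
      simp only [Matrix.vecMul, dotProduct]
      exact Finset.sum_congr rfl fun r _ => by rw [Fmat_zero]; rfl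
    rw [e1, hFN, Matrix.one_apply]
    by_cases h : i = 0
    · subst h; simp
    · rw [if_neg (Ne.symm h), if_neg h]
  -- Path 1: connect x to y through the localization S₁ = K[s][1/det]
  let M₁ : Matrix (Fin n) (Fin n) (Polynomial K) := Matrix.of fun a b =>
    Polynomial.X * Polynomial.C ((1 : Matrix (Fin n) (Fin n) K) a b)
      + (1 - Polynomial.X) * Polynomial.C (Fmat u i₀ a b)
  have hM1 : M₁.map (Polynomial.evalRingHom (1:K)) = 1 := by
    ext a b
    rw [Matrix.map_apply]
    show Polynomial.evalRingHom 1 (Polynomial.X * Polynomial.C ((1 : Matrix (Fin n) (Fin n) K) a b)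
      + (1 - Polynomial.X) * Polynomial.C (Fmat u i₀ a b)) = (1 : Matrix (Fin n) (Fin n) K) a b
    simp
  have hM0 : M₁.map (Polynomial.evalRingHom (0:K)) = Fmat u i₀ := by
    ext a b
    rw [Matrix.map_apply]
    show Polynomial.evalRingHom 0 (Polynomial.X * Polynomial.C ((1 : Matrix (Fin n) (Fin n) K) a b)
      + (1 - Polynomial.X) * Polynomial.C (Fmat u i₀ a b)) = Fmat u i₀ a b
    simp
  set p₁ := M₁.det with hp₁def
  have hp1 : Polynomial.evalRingHom (1:K) p₁ = 1 := by
    rw [hp₁def, RingHom.map_det, RingHom.mapMatrix_apply, hM1, Matrix.det_one]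
  have hp0 : Polynomial.evalRingHom (0:K) p₁ = (Fmat u i₀).det := by
    rw [hp₁def, RingHom.map_det, RingHom.mapMatrix_apply, hM0]
  have hp₁ne : p₁ ≠ 0 := fun h => by
    rw [h, map_zero] at hp1; exact zero_ne_one hp1
  have hdetF : IsUnit (Fmat u i₀).det := Matrix.isUnit_det_of_right_inverse hFN
  haveI : IsDomain (Localization.Away p₁) := IsLocalization.isDomain_localization
    (powers_le_nonZeroDivisors_of_noZeroDivisors hp₁ne)
  let ι : Polynomial K →+* Localization.Away p₁ := algebraMap (Polynomial K) (Localization.Away p₁)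
  have hdet' : IsUnit (M₁.map ι).det := by
    have e : (M₁.map ι).det = ι p₁ := by
      show (M₁.map ⇑ι).det = ι M₁.det
      rw [RingHom.map_det, RingHom.mapMatrix_apply]
    rw [e]
    exact IsLocalization.Away.algebraMap_isUnit p₁
  have hMN₁ : (M₁.map ι) * (M₁.map ι)⁻¹ = 1 := Matrix.mul_nonsing_inv _ hdet'
  have hNM₁ : (M₁.map ι)⁻¹ * (M₁.map ι) = 1 := Matrix.nonsing_inv_mul _ hdet'
  let ιK : K →+* Localization.Away p₁ := ι.comp Polynomial.C
  have hdat₁ : Rels n (bcDat (M₁.map ι) (M₁.map ι)⁻¹ (⇑ιK ∘ xdat)) :=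
    rels_bcDat hMN₁ hNM₁ (rels_comp ιK hx)
  let ψ₁ : R →+* Localization.Away p₁ := mkHom k (ιK.comp f₀) _ hdat₁
  have hg1u : IsUnit (Polynomial.evalRingHom (1:K) p₁) := by rw [hp1]; exact isUnit_one
  have hg0u : IsUnit (Polynomial.evalRingHom (0:K) p₁) := by rw [hp0]; exact hdetF
  let g₁ : Localization.Away p₁ →+* K := IsLocalization.Away.lift p₁ hg1u
  let g₀ : Localization.Away p₁ →+* K := IsLocalization.Away.lift p₁ hg0u
  have hg₁ι : g₁.comp ι = Polynomial.evalRingHom (1:K) := IsLocalization.Away.lift_comp p₁ hg1u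
  have hg₀ι : g₀.comp ι = Polynomial.evalRingHom (0:K) := IsLocalization.Away.lift_comp p₁ hg0u
  have hg₁ι' : (⇑g₁ ∘ ⇑ι) = ⇑(Polynomial.evalRingHom (1:K)) := by
    rw [← hg₁ι]; rfl
  have hg₀ι' : (⇑g₀ ∘ ⇑ι) = ⇑(Polynomial.evalRingHom (0:K)) := by
    rw [← hg₀ι]; rfl
  have hg₁K : ∀ a : K, g₁ (ιK a) = a := fun a => by
    have : g₁ (ι (Polynomial.C a)) = Polynomial.evalRingHom (1:K) (Polynomial.C a) :=
      congrFun hg₁ι' (Polynomial.C a)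
    simpa [ιK] using this
  have hg₀K : ∀ a : K, g₀ (ιK a) = a := fun a => by
    have : g₀ (ι (Polynomial.C a)) = Polynomial.evalRingHom (0:K) (Polynomial.C a) :=
      congrFun hg₀ι' (Polynomial.C a)
    simpa [ιK] using this
  -- evaluation of the family at s = 1 recovers xdat
  have key₁ : ∀ v, g₁ (bcDat (M₁.map ι) (M₁.map ι)⁻¹ (⇑ιK ∘ xdat) v) = xdat v := by
    intro v
    have hcomp := congrFun (bcDat_comp g₁ (M₁.map ι) (M₁.map ι)⁻¹ (⇑ιK ∘ xdat)) v
    have hM : (M₁.map ι).map ⇑g₁ = 1 := by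
      rw [Matrix.map_map, hg₁ι', hM1]
    have hN : ((M₁.map ι)⁻¹).map ⇑g₁ = 1 := by
      have h2 := congrArg (fun A => Matrix.map A ⇑g₁) hMN₁
      simp only [Matrix.map_mul] at h2
      rw [hM, Matrix.one_mul] at h2
      rw [h2]
      exact Matrix.map_one _ (map_zero g₁) (map_one g₁)
    have hdat : (⇑g₁ ∘ ⇑ιK ∘ xdat) = xdat := funext fun w => hg₁K (xdat w)
    rw [hM, hN, hdat, bcDat_one] at hcomp
    exact hcomp
  -- evaluation of the family at s = 0 recovers ydat
  have key₀ : ∀ v, g₀ (bcDat (M₁.map ι) (M₁.map ι)⁻¹ (⇑ιK ∘ xdat) v) = ydat v := by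
    intro v
    have hcomp := congrFun (bcDat_comp g₀ (M₁.map ι) (M₁.map ι)⁻¹ (⇑ιK ∘ xdat)) v
    have hM : (M₁.map ι).map ⇑g₀ = Fmat u i₀ := by
      rw [Matrix.map_map, hg₀ι', hM0]
    have hN : ((M₁.map ι)⁻¹).map ⇑g₀ = NFmat u i₀ := by
      have h2 := congrArg (fun A => Matrix.map A ⇑g₀) hMN₁
      simp only [Matrix.map_mul] at h2
      rw [hM] at h2
      have h3 : Matrix.map (1 : Matrix (Fin n) (Fin n) (Localization.Away p₁)) ⇑g₀
          = (1 : Matrix (Fin n) (Fin n) K) :=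
        Matrix.map_one _ (map_zero g₀) (map_one g₀)
      rw [h3] at h2
      calc ((M₁.map ι)⁻¹).map ⇑g₀
          = 1 * (((M₁.map ι)⁻¹).map ⇑g₀) := by rw [Matrix.one_mul]
        _ = (NFmat u i₀ * Fmat u i₀) * (((M₁.map ι)⁻¹).map ⇑g₀) := by rw [hNF]
        _ = NFmat u i₀ * (Fmat u i₀ * (((M₁.map ι)⁻¹).map ⇑g₀)) := by rw [Matrix.mul_assoc]
        _ = NFmat u i₀ := by rw [h2, Matrix.mul_one]
    have hdat : (⇑g₀ ∘ ⇑ιK ∘ xdat) = xdat := funext fun w => hg₀K (xdat w)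
    rw [hM, hN, hdat] at hcomp
    exact hcomp
  have hcomp₁ : g₁.comp ψ₁ = mkHom k f₀ xdat hx := by
    refine hom_ext k (fun a => ?_) (fun v => ?_)
    · rw [RingHom.comp_apply, mkHom_mk_C, mkHom_mk_C, RingHom.comp_apply]
      exact hg₁K (f₀ a)
    · rw [RingHom.comp_apply, mkHom_mk_X, mkHom_mk_X]
      exact key₁ v
  have hcomp₀ : g₀.comp ψ₁ = mkHom k f₀ ydat hy := by
    refine hom_ext k (fun a => ?_) (fun v => ?_)
    · rw [RingHom.comp_apply, mkHom_mk_C, mkHom_mk_C, RingHom.comp_apply]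
      exact hg₀K (f₀ a)
    · rw [RingHom.comp_apply, mkHom_mk_X, mkHom_mk_X]
      exact key₀ v
  have hxpt : x = (⟨RingHom.ker (g₁.comp ψ₁), RingHom.ker_isPrime _⟩ : PrimeSpectrum R) := by
    apply PrimeSpectrum.ext
    show x.asIdeal = RingHom.ker (g₁.comp ψ₁)
    rw [hcomp₁, hφ, hkerφ]
  let y : PrimeSpectrum R := ⟨RingHom.ker (g₀.comp ψ₁), RingHom.ker_isPrime _⟩
  have hxy : x ∈ connectedComponent y := by
    rw [hxpt]
    exact point_mem_component ψ₁ g₁ g₀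
  -- Path 2: connect y to the square-zero point over K
  let ψ₂ : R →+* Polynomial K :=
    mkHom k ((Polynomial.C).comp f₀) (sdat ydat) (rels_sdat hy hyD)
  let e₁ : Polynomial K →+* K := Polynomial.evalRingHom 1
  let e₀ : Polynomial K →+* K := Polynomial.evalRingHom 0
  have hcomp₂ : e₁.comp ψ₂ = mkHom k f₀ ydat hy := by
    refine hom_ext k (fun a => ?_) (fun v => ?_)
    · rw [RingHom.comp_apply, mkHom_mk_C, mkHom_mk_C, RingHom.comp_apply]
      simp [e₁]
    · rw [RingHom.comp_apply, mkHom_mk_X, mkHom_mk_X]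
      exact sdat_eval_one hy hyD v
  have hcomp₂' : e₀.comp ψ₂ = mkHom k f₀ (zdat n K) rels_zdat := by
    refine hom_ext k (fun a => ?_) (fun v => ?_)
    · rw [RingHom.comp_apply, mkHom_mk_C, mkHom_mk_C, RingHom.comp_apply]
      simp [e₀]
    · rw [RingHom.comp_apply, mkHom_mk_X, mkHom_mk_X]
      exact sdat_eval_zero hy hyD v
  have hyz : y ∈ connectedComponent
      (⟨RingHom.ker (e₀.comp ψ₂), RingHom.ker_isPrime _⟩ : PrimeSpectrum R) := by
    have hy' : y = (⟨RingHom.ker (e₁.comp ψ₂), RingHom.ker_isPrime _⟩ : PrimeSpectrum R) := by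
      apply PrimeSpectrum.ext
      show RingHom.ker (g₀.comp ψ₁) = RingHom.ker (e₁.comp ψ₂)
      rw [hcomp₀, hcomp₂]
    rw [hy']
    exact point_mem_component ψ₂ e₁ e₀
  -- the endpoint is z
  have hzz : (⟨RingHom.ker (e₀.comp ψ₂), RingHom.ker_isPrime _⟩ : PrimeSpectrum R) = z := by
    apply PrimeSpectrum.ext
    show RingHom.ker (e₀.comp ψ₂) = RingHom.ker Φz
    rw [hcomp₂']
    have hfact : mkHom k f₀ (zdat n K) rels_zdat = f₀.comp Φz := by
      refine hom_ext k (fun a => ?_) (fun v => ?_)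
      · rw [mkHom_mk_C, RingHom.comp_apply]
        exact congrArg f₀ (mkHom_mk_C k (RingHom.id k) (zdat n k) rels_zdat a).symm
      · rw [mkHom_mk_X, RingHom.comp_apply]
        have h2 : Φz (Ideal.Quotient.mk _ (MvPolynomial.X v)) = zdat n k v :=
          mkHom_mk_X k (RingHom.id k) (zdat n k) rels_zdat v
        rw [h2]
        match v with
        | Sum.inl (i,j,l) => simp [zdat, apply_ite f₀]
        | Sum.inr i => simp [zdat, apply_ite f₀]
    rw [hfact]
    ext r
    rw [RingHom.mem_ker, RingHom.mem_ker, RingHom.comp_apply]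
    constructor
    · intro h
      have h2 : f₀ (Φz r) = f₀ 0 := by rw [map_zero]; exact h
      exact f₀.injective h2
    · intro h
      rw [h, map_zero]
  rw [hzz] at hyz
  have hcc : connectedComponent z = connectedComponent y := connectedComponent_eq hyz
  rw [← hcc] at hxy
  exact hxy
end

section
/- Let k be a nonzero commutative ring whose only idempotents are 0 and 1 (equivalently, Spec k is connected). Then for every n ≥ 0, the natural group homomorphism from the symmetric group on n letters to the group of k-algebra automorphisms of the product algebra k^n (acting by permuting the coordinates) is an isomorphism; i.e., every k-algebra automorphism of k × ... × k (n factors) is a coordinate permutation. -/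
/-- The `k`-algebra automorphism of `kⁿ` given by permuting the coordinates by
`σ` (the left action: the `i`-th coordinate of `permAlgEquiv σ f` is `f (σ⁻¹ i)`). -/
def permAlgEquiv (k : Type) [CommRing k] (n : ℕ) (σ : Equiv.Perm (Fin n)) :
    (Fin n → k) ≃ₐ[k] (Fin n → k) :=
  { Equiv.piCongrLeft' (fun _ => k) σ with
    map_mul' := fun _ _ => rfl
    map_add' := fun _ _ => rfl
    commutes' := fun _ => rfl }

/-- If `k` is a nonzero commutative ring whose only idempotents are `0` and `1`,
then for every `n` the natural group homomorphism `σ ↦ permAlgEquiv σ` from the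
symmetric group on `n` letters to the group of `k`-algebra automorphisms of `kⁿ`
is an isomorphism: it is a group homomorphism and it is bijective, i.e. every
`k`-algebra automorphism of `k × ⋯ × k` is a coordinate permutation. -/
theorem stmt11 (k : Type) [CommRing k] (hk : Nontrivial k)
    (hid : ∀ e : k, IsIdempotentElem e → e = 0 ∨ e = 1) (n : ℕ) :
    (∀ σ τ : Equiv.Perm (Fin n),
        permAlgEquiv k n (σ * τ) = permAlgEquiv k n σ * permAlgEquiv k n τ) ∧
    Function.Bijective (permAlgEquiv k n) := by
  have key : ∀ σ : Equiv.Perm (Fin n), ∀ x : Fin n → k, ∀ j,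
      permAlgEquiv k n σ x j = x (σ.symm j) := fun _ _ _ => rfl
  refine ⟨fun σ τ => by ext x j; rfl, ?_, ?_⟩
  · -- injective
    intro σ τ h
    have hsy : ∀ j, σ.symm j = τ.symm j := by
      intro j
      by_contra hne
      have heq : permAlgEquiv k n σ (Pi.single (σ.symm j) (1:k)) j
          = permAlgEquiv k n τ (Pi.single (σ.symm j) (1:k)) j := by rw [h]
      rw [key, key, Pi.single_eq_same, Pi.single_eq_of_ne (Ne.symm ?_)] at heq
      · exact one_ne_zero heq
      · intro h'; exact hne (by rw [h'])
    have hsymm : σ.symm = τ.symm := Equiv.ext hsy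
    simpa using congrArg Equiv.symm hsymm
  · -- surjective
    intro φ
    set a : Fin n → Fin n → k := fun i j => φ (Pi.single i 1) j with ha
    have hsingle_mul : ∀ i i' : Fin n, (Pi.single i 1 * Pi.single i' 1 : Fin n → k)
        = if i = i' then Pi.single i 1 else 0 := by
      intro i i'
      funext j
      by_cases h : i = i' <;> by_cases hj : j = i <;> by_cases hj' : j = i' <;>
        simp_all [Pi.single_apply]
    have hidem : ∀ i j, a i j = 0 ∨ a i j = 1 := by
      intro i j
      refine hid _ ?_
      have : φ (Pi.single i 1) * φ (Pi.single i 1) = φ (Pi.single i 1) := by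
        rw [← map_mul, hsingle_mul]; simp
      exact congrFun this j
    have horth : ∀ i i' : Fin n, i ≠ i' → ∀ j, a i j * a i' j = 0 := by
      intro i i' h j
      have : φ (Pi.single i 1) * φ (Pi.single i' 1) = 0 := by
        rw [← map_mul, hsingle_mul]; simp [h]
      exact congrFun this j
    have hsum : ∀ j, ∑ i, a i j = 1 := by
      intro j
      have h1 : (∑ i, Pi.single i (1:k) : Fin n → k) = 1 := by
        funext j'
        simp [Finset.sum_apply, Pi.single_apply]
      have : φ (∑ i, Pi.single i (1:k)) = 1 := by rw [h1, map_one]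
      rw [map_sum] at this
      have h2 := congrFun this j
      simpa [Finset.sum_apply, ha] using h2
    have hexu : ∀ j, ∃! i, a i j = 1 := by
      intro j
      have hex : ∃ i, a i j = 1 := by
        by_contra hc
        push_neg at hc
        have hz : ∀ i, a i j = 0 := fun i => (hidem i j).resolve_right (hc i)
        have hs := hsum j
        rw [Finset.sum_congr rfl fun i _ => hz i] at hs
        simp at hs
      obtain ⟨i, hi⟩ := hex
      refine ⟨i, hi, fun i' hi' => ?_⟩
      by_contra hne
      have := horth i' i hne j
      rw [hi, hi'] at this
      simp at this
    let f : Fin n → Fin n := fun j => (hexu j).choose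
    have hf1 : ∀ j, a (f j) j = 1 := fun j => (hexu j).choose_spec.1
    have hfu : ∀ j i, a i j = 1 → i = f j := fun j i h => (hexu j).choose_spec.2 i h
    have hf0 : ∀ j i, i ≠ f j → a i j = 0 := by
      intro j i h
      rcases hidem i j with h0 | h1
      · exact h0
      · exact absurd (hfu j i h1) h
    have hfsurj : Function.Surjective f := by
      intro i
      have hne : φ (Pi.single i 1) ≠ 0 := by
        intro hz
        have : (Pi.single i (1:k)) = 0 := φ.injective (by rw [hz, map_zero])
        have := congrFun this i
        simp at this
      have : ∃ j, a i j ≠ 0 := by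
        by_contra hc
        push_neg at hc
        exact hne (funext hc)
      obtain ⟨j, hj⟩ := this
      have : a i j = 1 := (hidem i j).resolve_left hj
      exact ⟨j, (hfu j i this).symm⟩
    have hfbij : Function.Bijective f := Finite.surjective_iff_bijective.mp hfsurj
    refine ⟨(Equiv.ofBijective f hfbij)⁻¹, ?_⟩
    ext x j
    rw [key]
    show x (f j) = φ x j
    have hx : x = ∑ i, Pi.single i (x i) := (Finset.univ_sum_single x).symm
    have hsm : ∀ i, (Pi.single i (x i) : Fin n → k) = x i • (Pi.single i 1 : Fin n → k) := by
      intro i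
      funext j'
      by_cases h : j' = i <;> simp [Pi.single_apply, h]
    symm
    calc φ x j = (∑ i, x i • φ (Pi.single i 1)) j := by
          conv_lhs => rw [hx]
          rw [map_sum]
          simp only [hsm, map_smul]
      _ = ∑ i, x i * a i j := by simp [Finset.sum_apply, smul_eq_mul, ha]
      _ = x (f j) := by
          rw [Finset.sum_eq_single (f j)]
          · rw [hf1]; ring
          · intro i _ h; rw [hf0 j i h]; ring
          · intro h; exact absurd (Finset.mem_univ _) h
end

section
/- For n = 1, 2, 3, the Z-algebra R¹_n(Z) is isomorphic to a polynomial ring over Z in m variables, where m = 0, 2, 6 respectively; i.e., the moduli space B^1_n of rank-n algebras with unital first basis vector is isomorphic to affine space A^0_Z, A^2_Z, A^6_Z respectively. -/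
open MvPolynomial in
/-- The defining relations of the moduli space `B¹_n` of rank-`n` algebras with a
basis whose first vector is the identity: commutativity `c_{ijl} - c_{jil}`,
associativity `Σ_m c_{ijm} c_{mkl} - Σ_m c_{jkm} c_{iml}`, and `c_{1jl} - δ_{jl}`
(indices are `0`-based, so the first basis vector has index `0`). -/
def structRels1 (k : Type) [CommRing k] (n : ℕ) [NeZero n] :
    Set (MvPolynomial (Fin n × Fin n × Fin n) k) :=
  (Set.range fun t : Fin n × Fin n × Fin n =>
      (X (t.1, t.2.1, t.2.2) : MvPolynomial (Fin n × Fin n × Fin n) k)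
        - X (t.2.1, t.1, t.2.2))
  ∪ (Set.range fun t : Fin n × Fin n × Fin n × Fin n =>
      (∑ m : Fin n, X (t.1, t.2.1, m) * X (m, t.2.2.1, t.2.2.2))
        - ∑ m : Fin n, X (t.2.1, t.2.2.1, m) * X (t.1, m, t.2.2.2))
  ∪ (Set.range fun t : Fin n × Fin n =>
      (X (0, t.1, t.2) : MvPolynomial (Fin n × Fin n × Fin n) k)
        - if t.1 = t.2 then 1 else 0)

/-- `R1ring k n` is the coordinate ring of the moduli space `B¹_{n,k}` of rank-`n`
algebras equipped with a basis whose first vector equals `1`. -/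
abbrev R1ring (k : Type) [CommRing k] (n : ℕ) [NeZero n] : Type :=
  MvPolynomial (Fin n × Fin n × Fin n) k ⧸ Ideal.span (structRels1 k n)

namespace StructAux
open MvPolynomial

variable {n : ℕ} [NeZero n]

lemma mem_comm (t : Fin n × Fin n × Fin n) :
    (X (t.1, t.2.1, t.2.2) - X (t.2.1, t.1, t.2.2) : MvPolynomial _ ℤ)
      ∈ Ideal.span (structRels1 ℤ n) :=
  Ideal.subset_span (Or.inl (Or.inl ⟨t, rfl⟩))

lemma mem_assoc (t : Fin n × Fin n × Fin n × Fin n) :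
    ((∑ m : Fin n, X (t.1, t.2.1, m) * X (m, t.2.2.1, t.2.2.2))
      - ∑ m : Fin n, X (t.2.1, t.2.2.1, m) * X (t.1, m, t.2.2.2) : MvPolynomial _ ℤ)
      ∈ Ideal.span (structRels1 ℤ n) :=
  Ideal.subset_span (Or.inl (Or.inr ⟨t, rfl⟩))

lemma mem_unit (t : Fin n × Fin n) :
    (X (0, t.1, t.2) - if t.1 = t.2 then 1 else 0 : MvPolynomial _ ℤ)
      ∈ Ideal.span (structRels1 ℤ n) :=
  Ideal.subset_span (Or.inr ⟨t, rfl⟩)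

lemma mk_comm (i j l : Fin n) :
    Ideal.Quotient.mk (Ideal.span (structRels1 ℤ n)) (X (i, j, l)) =
      Ideal.Quotient.mk _ (X (j, i, l)) :=
  Ideal.Quotient.eq.mpr (mem_comm (i, j, l))

lemma mk_unit (j l : Fin n) :
    Ideal.Quotient.mk (Ideal.span (structRels1 ℤ n)) (X ((0 : Fin n), j, l)) =
      Ideal.Quotient.mk _ (if j = l then 1 else 0) :=
  Ideal.Quotient.eq.mpr (mem_unit (j, l))

lemma mk_assoc3 (i j k l : Fin 3) :
    Ideal.Quotient.mk (Ideal.span (structRels1 ℤ 3)) (X (i, j, 0)) *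
        Ideal.Quotient.mk _ (X ((0 : Fin 3), k, l)) +
      Ideal.Quotient.mk _ (X (i, j, 1)) * Ideal.Quotient.mk _ (X ((1 : Fin 3), k, l)) +
      Ideal.Quotient.mk _ (X (i, j, 2)) * Ideal.Quotient.mk _ (X ((2 : Fin 3), k, l)) =
    Ideal.Quotient.mk _ (X (j, k, 0)) * Ideal.Quotient.mk _ (X (i, (0 : Fin 3), l)) +
      Ideal.Quotient.mk _ (X (j, k, 1)) * Ideal.Quotient.mk _ (X (i, (1 : Fin 3), l)) +
      Ideal.Quotient.mk _ (X (j, k, 2)) * Ideal.Quotient.mk _ (X (i, (2 : Fin 3), l)) := by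
  have h := Ideal.Quotient.eq.mpr (mem_assoc (n := 3) (i, j, k, l))
  simp only [Fin.sum_univ_three, map_add, map_mul] at h
  exact h

/-- Generic constructor for an isomorphism `R¹_n(ℤ) ≃ polynomial ring`. -/
noncomputable def mkEquiv {m : ℕ} (f : Fin n × Fin n × Fin n → MvPolynomial (Fin m) ℤ)
    (g : Fin m → Fin n × Fin n × Fin n)
    (hrel : ∀ r ∈ structRels1 ℤ n, aeval f r = 0)
    (hfg : ∀ k, f (g k) = X k)
    (hgf : ∀ t, Ideal.Quotient.mk (Ideal.span (structRels1 ℤ n)) (rename g (f t)) =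
      Ideal.Quotient.mk _ (X t)) :
    R1ring ℤ n ≃ₐ[ℤ] MvPolynomial (Fin m) ℤ := by
  refine AlgEquiv.ofAlgHom
    (Ideal.Quotient.liftₐ _ (aeval f) ?_)
    ((Ideal.Quotient.mkₐ ℤ _).comp (rename g)) ?_ ?_
  · intro a ha
    refine Submodule.span_induction ?_ ?_ ?_ ?_ ha
    · exact fun x hx => hrel x hx
    · simp
    · intro x y _ _ hx hy; rw [map_add, hx, hy, add_zero]
    · intro c x _ hx; rw [smul_eq_mul, map_mul, hx, mul_zero]
  · apply MvPolynomial.algHom_ext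
    intro k
    simp
    exact (Ideal.Quotient.lift_mk _ _ _).trans (by simp [hfg k])
  · apply Ideal.Quotient.algHom_ext
    apply MvPolynomial.algHom_ext
    intro t
    simp
    exact (congrArg (fun p => Ideal.Quotient.mk _ (rename g p)) (Ideal.Quotient.lift_mk _ _ _)).trans (by simpa using hgf t)

end StructAux

open MvPolynomial StructAux

/-! ### The case `n = 1` -/

noncomputable def equiv1 : R1ring ℤ 1 ≃ₐ[ℤ] MvPolynomial (Fin 0) ℤ :=
  StructAux.mkEquiv (fun _ => 1) Fin.elim0
    (by
      rintro r ((⟨t, rfl⟩ | ⟨t, rfl⟩) | ⟨⟨a, b⟩, rfl⟩)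
      · simp
      · simp
      · simp [Subsingleton.elim a b])
    (fun k => k.elim0)
    (by
      intro t
      have ht : t = (0, 0, 0) := Subsingleton.elim _ _
      subst ht
      simpa using (Ideal.Quotient.eq.mpr (StructAux.mem_unit (n := 1) (0, 0))).symm)

/-! ### The case `n = 2` -/

noncomputable def f2 : Fin 2 × Fin 2 × Fin 2 → MvPolynomial (Fin 2) ℤ := fun t =>
  if t.1 = 0 then (if t.2.1 = t.2.2 then 1 else 0)
  else if t.2.1 = 0 then (if t.1 = t.2.2 then 1 else 0)
  else X t.2.2

set_option maxHeartbeats 1000000 in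
set_option synthInstance.maxHeartbeats 400000 in
noncomputable def equiv2 : R1ring ℤ 2 ≃ₐ[ℤ] MvPolynomial (Fin 2) ℤ :=
  StructAux.mkEquiv f2 (fun k => (1, 1, k))
    (by
      rintro r ((⟨⟨i, j, l⟩, rfl⟩ | ⟨⟨i, j, k, l⟩, rfl⟩) | ⟨⟨j, l⟩, rfl⟩)
      · fin_cases i <;> fin_cases j <;> fin_cases l <;> simp [f2]
      · fin_cases i <;> fin_cases j <;> fin_cases k <;> fin_cases l <;>
          simp [f2, Fin.sum_univ_two] <;> first | rfl | ring
      · fin_cases j <;> fin_cases l <;> simp [f2])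
    (fun k => by simp [f2])
    (by
      rintro ⟨i, j, l⟩
      fin_cases i <;> fin_cases j <;> fin_cases l <;>
        simp [f2, -Prod.mk_zero_zero, -Prod.mk_one_one,
          StructAux.mk_comm (n := 2) 1 0, StructAux.mk_unit (n := 2)])

/-! ### The case `n = 3` -/

noncomputable def A0 : MvPolynomial (Fin 6) ℤ := X 1 * X 2 + X 3 ^ 2 - X 0 * X 3 - X 1 * X 5
noncomputable def B0 : MvPolynomial (Fin 6) ℤ := X 1 * X 4 - X 2 * X 3
noncomputable def D0 : MvPolynomial (Fin 6) ℤ := X 2 ^ 2 + X 3 * X 4 - X 0 * X 4 - X 2 * X 5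

noncomputable def g3 : Fin 3 → Fin 3 → Fin 3 → MvPolynomial (Fin 6) ℤ :=
  ![![![1, 0, 0], ![0, 1, 0], ![0, 0, 1]],
    ![![0, 1, 0], ![A0, X 0, X 1], ![B0, X 2, X 3]],
    ![![0, 0, 1], ![B0, X 2, X 3], ![D0, X 4, X 5]]]

noncomputable def f3 : Fin 3 × Fin 3 × Fin 3 → MvPolynomial (Fin 6) ℤ := fun t =>
  g3 t.1 t.2.1 t.2.2

def gv : Fin 6 → Fin 3 × Fin 3 × Fin 3
  | 0 => (1, 1, 1)
  | 1 => (1, 1, 2)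
  | 2 => (1, 2, 1)
  | 3 => (1, 2, 2)
  | 4 => (2, 2, 1)
  | 5 => (2, 2, 2)

noncomputable abbrev q3 :
    MvPolynomial (Fin 3 × Fin 3 × Fin 3) ℤ →+*
      MvPolynomial (Fin 3 × Fin 3 × Fin 3) ℤ ⧸ Ideal.span (structRels1 ℤ 3) :=
  Ideal.Quotient.mk (Ideal.span (structRels1 ℤ 3))

set_option maxHeartbeats 2000000 in
set_option synthInstance.maxHeartbeats 400000 in
noncomputable def equiv3 : R1ring ℤ 3 ≃ₐ[ℤ] MvPolynomial (Fin 6) ℤ :=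
  StructAux.mkEquiv f3 gv
    (by
      rintro r ((⟨⟨i, j, l⟩, rfl⟩ | ⟨⟨i, j, k, l⟩, rfl⟩) | ⟨⟨j, l⟩, rfl⟩)
      · fin_cases i <;> fin_cases j <;> fin_cases l <;>
          simp [f3, g3, Matrix.vecHead, Matrix.vecTail]
      · simp only [Fin.sum_univ_three, map_sub, map_add, map_mul, aeval_X]
        fin_cases i <;> fin_cases j <;> fin_cases k <;> fin_cases l <;>
          simp only [f3, g3, Matrix.vecHead, Matrix.vecTail, Matrix.cons_val, Fin.reduceFinMk] <;>
          norm_num [A0, B0, D0] <;> first | rfl | ring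
      · fin_cases j <;> fin_cases l <;> simp [f3, g3, Matrix.vecHead, Matrix.vecTail])
    (fun k => by fin_cases k <;> simp [gv, f3, g3, Matrix.vecHead, Matrix.vecTail])
    (by
      rintro ⟨i, j, l⟩
      fin_cases i <;> fin_cases j <;> fin_cases l <;>
        simp [f3, g3, A0, B0, D0, gv, Matrix.vecHead, Matrix.vecTail,
          -Prod.mk_zero_zero, -Prod.mk_one_one,
          StructAux.mk_comm (n := 3) 1 0, StructAux.mk_comm (n := 3) 2 0,
          StructAux.mk_comm (n := 3) 2 1, StructAux.mk_unit (n := 3)]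
      · -- (1,1,0)
        have h := StructAux.mk_assoc3 1 1 2 2
        have hu22 : q3 (X ((0 : Fin 3), 2, 2)) = 1 := by
          simpa using StructAux.mk_unit (n := 3) 2 2
        have hu12 : q3 (X ((0 : Fin 3), 1, 2)) = 0 := by
          simpa using StructAux.mk_unit (n := 3) 1 2
        have hc : q3 (X ((1 : Fin 3), 0, 2)) = q3 (X ((0 : Fin 3), 1, 2)) :=
          StructAux.mk_comm 1 0 2
        linear_combination -h + q3 (X ((1 : Fin 3), 1, 0)) * hu22
          - q3 (X ((1 : Fin 3), 2, 0)) * hc - q3 (X ((1 : Fin 3), 2, 0)) * hu12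
      · -- (1,2,0)
        have h := StructAux.mk_assoc3 1 1 2 1
        have hu21 : q3 (X ((0 : Fin 3), 2, 1)) = 0 := by
          simpa using StructAux.mk_unit (n := 3) 2 1
        have hu11 : q3 (X ((0 : Fin 3), 1, 1)) = 1 := by
          simpa using StructAux.mk_unit (n := 3) 1 1
        have hc : q3 (X ((1 : Fin 3), 0, 1)) = q3 (X ((0 : Fin 3), 1, 1)) :=
          StructAux.mk_comm 1 0 1
        linear_combination h - q3 (X ((1 : Fin 3), 1, 0)) * hu21
          + q3 (X ((1 : Fin 3), 2, 0)) * hc + q3 (X ((1 : Fin 3), 2, 0)) * hu11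
      · -- (2,1,0)
        have h := StructAux.mk_assoc3 1 1 2 1
        have hu21 : q3 (X ((0 : Fin 3), 2, 1)) = 0 := by
          simpa using StructAux.mk_unit (n := 3) 2 1
        have hu11 : q3 (X ((0 : Fin 3), 1, 1)) = 1 := by
          simpa using StructAux.mk_unit (n := 3) 1 1
        have hc : q3 (X ((1 : Fin 3), 0, 1)) = q3 (X ((0 : Fin 3), 1, 1)) :=
          StructAux.mk_comm 1 0 1
        linear_combination h - q3 (X ((1 : Fin 3), 1, 0)) * hu21
          + q3 (X ((1 : Fin 3), 2, 0)) * hc + q3 (X ((1 : Fin 3), 2, 0)) * hu11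
      · -- (2,2,0)
        have h := StructAux.mk_assoc3 1 2 2 1
        have hu21 : q3 (X ((0 : Fin 3), 2, 1)) = 0 := by
          simpa using StructAux.mk_unit (n := 3) 2 1
        have hu11 : q3 (X ((0 : Fin 3), 1, 1)) = 1 := by
          simpa using StructAux.mk_unit (n := 3) 1 1
        have hc : q3 (X ((1 : Fin 3), 0, 1)) = q3 (X ((0 : Fin 3), 1, 1)) :=
          StructAux.mk_comm 1 0 1
        linear_combination h - q3 (X ((1 : Fin 3), 2, 0)) * hu21
          + q3 (X ((2 : Fin 3), 2, 0)) * hc + q3 (X ((2 : Fin 3), 2, 0)) * hu11)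

/-- For `n = 1, 2, 3` the `ℤ`-algebra `R¹_n(ℤ)` is isomorphic to a polynomial
ring over `ℤ` in `0`, `2`, `6` variables respectively: the moduli space `B¹_n` is
isomorphic to affine space `𝔸⁰`, `𝔸²`, `𝔸⁶` over `ℤ`. -/
theorem stmt12 :
    Nonempty (R1ring ℤ 1 ≃ₐ[ℤ] MvPolynomial (Fin 0) ℤ) ∧
    Nonempty (R1ring ℤ 2 ≃ₐ[ℤ] MvPolynomial (Fin 2) ℤ) ∧
    Nonempty (R1ring ℤ 3 ≃ₐ[ℤ] MvPolynomial (Fin 6) ℤ) := by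
  exact ⟨⟨equiv1⟩, ⟨equiv2⟩, ⟨equiv3⟩⟩
end

section
/- Let V and W be finite-dimensional vector spaces over a field k, and let β : V × V → W be a symmetric bilinear map such that the span of β(V × V) is all of W, but for every proper subspace U ⊊ V the span of β(U × U) is not all of W. Then dim V ≤ dim W + 1. -/
open Module Submodule LinearMap Polynomial



lemma perturb {k V W : Type*} [Field k] [Infinite k] [AddCommGroup V] [Module k V]
    [AddCommGroup W] [Module k W] [FiniteDimensional k W]
    (β : V →ₗ[k] V →ₗ[k] W) (v : V)
    (hmax : ∀ w : V, finrank k (LinearMap.range (β w)) ≤ finrank k (LinearMap.range (β v)))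
    {z : V} (hz : β v z = 0) (x : V) : β x z ∈ LinearMap.range (β v) := by
  by_contra hB
  set r := finrank k (LinearMap.range (β v)) with hr
  let b : Basis (Fin r) k ↥(LinearMap.range (β v)) := Module.finBasis k _
  have hexists : ∀ i : Fin r, ∃ u : V, β v u = (b i : W) := fun i => (b i).2
  choose u hu using hexists
  have hGindep0 : LinearIndependent k (fun i : Fin r => β v (u i)) := by
    have : (fun i : Fin r => β v (u i)) = fun i => ((b i : W)) := funext fun i => hu i
    rw [this]
    exact b.linearIndependent.map' (Submodule.subtype _) (Submodule.ker_subtype _)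
  have hGspan : Submodule.span k (Set.range (fun i : Fin r => β v (u i)))
      = LinearMap.range (β v) := by
    have h1 : (Set.range (fun i : Fin r => β v (u i)))
        = (Submodule.subtype _) '' (Set.range b) := by
      rw [← Set.range_comp]
      exact Set.range_eq_iff _ _ |>.mpr ⟨fun i => ⟨i, (hu i).symm⟩, fun w ⟨i, hi⟩ => ⟨i, by
        simp [← hi, hu i]⟩⟩
    rw [h1, ← Submodule.map_span, b.span_eq, Submodule.map_top, Submodule.range_subtype]
  set G : Fin (r+1) → W := Fin.snoc (fun i : Fin r => β v (u i)) (β x z) with hG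
  have hGindep : LinearIndependent k G :=
    linearIndependent_fin_snoc.mpr ⟨hGindep0, by rw [hGspan]; exact hB⟩
  -- coordinate functional
  let bS : Basis (Fin (r+1)) k ↥(Submodule.span k (Set.range G)) := Basis.span hGindep
  obtain ⟨Cc, hC⟩ := Submodule.exists_isCompl (Submodule.span k (Set.range G))
  set proj := Submodule.linearProjOfIsCompl _ _ hC
  set π : W →ₗ[k] (Fin (r+1) → k) :=
    (Finsupp.linearEquivFunOnFinite k k (Fin (r+1))).toLinearMap ∘ₗ
      (bS.repr.toLinearMap) ∘ₗ proj with hπ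
  have hπG : ∀ j, π (G j) = Pi.single j 1 := by
    intro j
    have h1 : proj (G j) = bS j := by
      have h2 : G j = ((bS j : W)) := congrArg Subtype.val (Basis.span_apply hGindep j).symm
      rw [h2]
      exact Submodule.linearProjOfIsCompl_apply_left hC _
    simp only [hπ, LinearMap.comp_apply, h1, Basis.repr_self]
    ext i
    simp [Finsupp.linearEquivFunOnFinite, Finsupp.single_apply, Pi.single_apply, eq_comm]
    exact Finsupp.single_apply.symm
  set G' : Fin (r+1) → W := Fin.snoc (fun i : Fin r => β x (u i)) 0 with hG'
  set a : Matrix (Fin (r+1)) (Fin (r+1)) k := fun i j => π (G j) i with ha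
  set bM : Matrix (Fin (r+1)) (Fin (r+1)) k := fun i j => π (G' j) i with hbM
  have haId : a = 1 := by
    ext i j
    have hx1 : a i j = π (G j) i := rfl
    rw [hx1, hπG j]
    simp [Matrix.one_apply, Pi.single_apply, eq_comm]
  -- polynomial argument
  have key : ∃ t : k, t ≠ 0 ∧ LinearIndependent k (fun j => fun i => a i j + t * bM i j) := by
    set P : Polynomial k :=
      (Matrix.of fun i j => (C (a i j) + X * C (bM i j))).det with hP
    have heval : ∀ t : k, P.eval t = (Matrix.of fun i j => a i j + t * bM i j).det := by
      intro t
      have := RingHom.map_det (evalRingHom t) (Matrix.of fun i j => (C (a i j) + X * C (bM i j)))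
      simp only [hP, coe_evalRingHom] at this ⊢
      rw [this]
      congr 1
      ext i j
      simp only [RingHom.mapMatrix_apply, Matrix.map_apply, Matrix.of_apply, coe_evalRingHom,
        eval_add, eval_C, eval_mul, eval_X]
      try ring
    have hP0 : P.eval 0 = 1 := by
      rw [heval]
      have : (Matrix.of fun i j => a i j + (0:k) * bM i j) = 1 := by
        ext i j; simp [haId]
      rw [this, Matrix.det_one]
    have hPne : P ≠ 0 := fun h => by simp [h] at hP0
    have hfin : ({x | IsRoot P x} ∪ {0}).Finite :=
      (Polynomial.finite_setOf_isRoot hPne).union (Set.finite_singleton 0)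
    obtain ⟨t, ht⟩ := hfin.infinite_compl.nonempty
    simp only [Set.mem_compl_iff, Set.mem_union, Set.mem_setOf_eq, Set.mem_singleton_iff,
      not_or] at ht
    refine ⟨t, ht.2, ?_⟩
    have hdet : (Matrix.of fun i j => a i j + t * bM i j).det ≠ 0 := by
      rw [← heval]; exact ht.1
    have := (Matrix.linearIndependent_cols_iff_isUnit
      (A := Matrix.of fun i j => a i j + t * bM i j)).mpr
      ((Matrix.isUnit_iff_isUnit_det _).mpr (isUnit_iff_ne_zero.mpr hdet))
    convert this using 1
    rfl
  obtain ⟨t, ht0, hindep⟩ := key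
  -- the perturbed family
  set Ht : Fin (r+1) → W := Fin.snoc (fun i : Fin r => (β (v + t • x)) (u i)) (β x z) with hHt
  have hπHt : ∀ j, π (Ht j) = fun i => a i j + t * bM i j := by
    intro j
    refine Fin.lastCases ?_ ?_ j
    · funext i
      simp only [hHt, Fin.snoc_last, ha, hbM, hG, hG']
      simp only [Fin.snoc_last, map_zero, Pi.zero_apply]
      ring
    · intro jj
      funext i
      have hexp : (β (v + t • x)) (u jj) = β v (u jj) + t • β x (u jj) := by
        rw [map_add, map_smul]
        simp
      simp only [hHt, Fin.snoc_castSucc]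
      rw [hexp, map_add, map_smul]
      simp only [ha, hbM, hG, hG', Fin.snoc_castSucc, Pi.add_apply, Pi.smul_apply, smul_eq_mul]
  have hHtindep : LinearIndependent k Ht := by
    apply LinearIndependent.of_comp π
    have : (π ∘ Ht) = fun j => fun i => a i j + t * bM i j := funext fun j => hπHt j
    rw [Function.comp_def]
    rw [funext fun j => hπHt j]
    exact hindep
  have hrange : ∀ j, Ht j ∈ LinearMap.range (β (v + t • x)) := by
    intro j
    refine Fin.lastCases ?_ (fun jj => ?_) j
    · simp only [hHt, Fin.snoc_last]
      refine ⟨t⁻¹ • z, ?_⟩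
      rw [map_smul]
      have : (β (v + t • x)) z = t • β x z := by
        rw [map_add, map_smul]
        simp [hz]
      rw [this, smul_smul, inv_mul_cancel₀ ht0, one_smul]
    · exact ⟨u jj, by simp [hHt]⟩
  have hle : Submodule.span k (Set.range Ht) ≤ LinearMap.range (β (v + t • x)) := by
    rw [Submodule.span_le]
    rintro w ⟨j, rfl⟩
    exact hrange j
  have h1 : finrank k (Submodule.span k (Set.range Ht)) = r + 1 := by
    rw [finrank_span_eq_card hHtindep]
    simp
  have h2 : finrank k (Submodule.span k (Set.range Ht))
      ≤ finrank k (LinearMap.range (β (v + t • x))) := Submodule.finrank_mono hle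
  have h3 := hmax (v + t • x)
  omega


section
variable {k V W : Type*} [Field k] [AddCommGroup V] [Module k V]
  [AddCommGroup W] [Module k W]

lemma prop_of_ker_le {φ ψ : Module.Dual k V} (hψ : ψ ≠ 0)
    (h : LinearMap.ker ψ ≤ LinearMap.ker φ) : ∃ c : k, φ = c • ψ := by
  have hu : ∃ u, ψ u ≠ 0 := by
    by_contra h'
    push_neg at h'
    exact hψ (LinearMap.ext fun u => h' u)
  obtain ⟨u, hu⟩ := hu
  refine ⟨φ u / ψ u, ?_⟩
  ext w
  have hmem : w - (ψ w / ψ u) • u ∈ LinearMap.ker ψ := by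
    simp only [LinearMap.mem_ker, map_sub, map_smul, smul_eq_mul]
    field_simp
    ring
  have := h hmem
  simp only [LinearMap.mem_ker, map_sub, map_smul, smul_eq_mul] at this
  have hφw : φ w = ψ w / ψ u * φ u := by
    rw [sub_eq_zero] at this
    exact this
  simp only [LinearMap.smul_apply, smul_eq_mul]
  rw [hφw]
  field_simp

lemma fzero (β : V →ₗ[k] V →ₗ[k] W)
    (hfull : Submodule.span k (Set.image2 (fun u v => β u v) (Set.univ : Set V) Set.univ) = ⊤)
    (f : Module.Dual k W) (hf : ∀ x y : V, f (β x y) = 0) : f = 0 := by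
  ext w
  have hw : w ∈ Submodule.span k (Set.image2 (fun u v => β u v) (Set.univ : Set V) Set.univ) := by
    rw [hfull]; trivial
  simp only [LinearMap.zero_apply]
  induction hw using Submodule.span_induction with
  | mem x hx => obtain ⟨a, -, b, -, rfl⟩ := hx; exact hf a b
  | zero => simp
  | add x y _ _ hx hy => simp [hx, hy]
  | smul c x _ hx => simp [hx]

end


section
variable {k V W : Type*} [Field k] [AddCommGroup V] [Module k V]
  [AddCommGroup W] [Module k W] [FiniteDimensional k V]

lemma Abound (β : V →ₗ[k] V →ₗ[k] W) (hsymm : ∀ x y : V, β x y = β y x)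
    (hfull : Submodule.span k (Set.image2 (fun u v => β u v) (Set.univ : Set V) Set.univ) = ⊤)
    (f : Module.Dual k W) (hf : f ≠ 0) :
    ∃ S : Submodule k (Module.Dual k V), finrank k S ≤ 2 ∧
      ∀ φ : Module.Dual k V, (∀ x y : V, φ x = 0 → φ y = 0 → f (β x y) = 0) → φ ∈ S := by
  classical
  set cond : Module.Dual k V → Prop :=
    fun φ => ∀ x y : V, φ x = 0 → φ y = 0 → f (β x y) = 0 with hcond
  have hne : ∀ φ, cond φ → φ ≠ 0 := by
    intro φ hφ h0
    subst h0
    exact hf (fzero β hfull f (fun x y => hφ x y rfl rfl))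
  by_cases hA : ∃ φ₀, cond φ₀
  swap
  · refine ⟨⊥, by simp, fun φ hφ => absurd ⟨φ, hφ⟩ hA⟩
  obtain ⟨φ₀, hφ₀⟩ := hA
  have hφ₀ne : φ₀ ≠ 0 := hne φ₀ hφ₀
  by_cases hprop : ∀ ψ, cond ψ → ∃ c : k, ψ = c • φ₀
  · refine ⟨Submodule.span k {φ₀}, ?_, fun ψ hψ => ?_⟩
    · refine le_trans ?_ (by norm_num : (1:ℕ) ≤ 2)
      rcases eq_or_ne φ₀ 0 with h | h
      · subst h; rw [Submodule.span_zero_singleton]; simp [finrank_bot]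
      · rw [finrank_span_singleton h]
    · obtain ⟨c, rfl⟩ := hprop ψ hψ
      exact Submodule.smul_mem _ c (Submodule.mem_span_singleton_self φ₀)
  · push_neg at hprop
    obtain ⟨χ, hχ, hχprop⟩ := hprop
    have hχne : χ ≠ 0 := hne χ hχ
    have hker : ¬ (LinearMap.ker χ ≤ LinearMap.ker φ₀) := by
      intro hle
      obtain ⟨c, hc⟩ := prop_of_ker_le hχne hle
      have hc0 : c ≠ 0 := by
        intro h0
        rw [h0, zero_smul] at hc
        exact hφ₀ne hc
      exact hχprop c⁻¹ (by rw [hc, smul_smul, inv_mul_cancel₀ hc0, one_smul])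
    rw [SetLike.le_def] at hker
    push_neg at hker
    obtain ⟨e₀, he₀k, he₀⟩ := hker
    rw [LinearMap.mem_ker] at he₀k
    have he₀ne : φ₀ e₀ ≠ 0 := fun h => he₀ (LinearMap.mem_ker.mpr h)
    set e := (φ₀ e₀)⁻¹ • e₀ with he
    have heφ : φ₀ e = 1 := by
      rw [he, map_smul, smul_eq_mul, inv_mul_cancel₀ he₀ne]
    have heχ : χ e = 0 := by
      rw [he, map_smul, he₀k, smul_zero]
    -- claim1
    have claim1 : ∀ u, φ₀ u = 0 → χ u = 0 → ∀ w, f (β u w) = 0 := by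
      intro u hu1 hu2 w
      have hdecomp : β u w = β u (w - φ₀ w • e) + φ₀ w • β u e := by
        rw [map_sub, map_smul]
        abel
      rw [hdecomp, map_add, map_smul]
      have h1 : f (β u (w - φ₀ w • e)) = 0 := by
        apply hφ₀ u (w - φ₀ w • e) hu1
        rw [map_sub, map_smul, heφ, smul_eq_mul, mul_one, sub_self]
      have h2 : f (β u e) = 0 := hχ u e hu2 heχ
      rw [h1, h2, smul_zero, add_zero]
    set R := LinearMap.ker φ₀ ⊓ LinearMap.ker χ with hR
    refine ⟨R.dualAnnihilator, ?_, ?_⟩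
    · -- dimension
      have h1 : finrank k R.dualAnnihilator = finrank k (V ⧸ R) :=
        (Subspace.quotEquivAnnihilator R).finrank_eq.symm
      have h2 : finrank k (V ⧸ R) + finrank k R = finrank k V :=
        Submodule.finrank_quotient_add_finrank R
      have h3 : finrank k (LinearMap.ker φ₀) + 1 ≥ finrank k V := by
        have := LinearMap.finrank_range_add_finrank_ker φ₀
        have hr : finrank k (LinearMap.range φ₀) ≤ 1 := by
          have := Submodule.finrank_le (LinearMap.range φ₀)
          simpa using this
        omega
      have h4 : finrank k (LinearMap.ker χ) + 1 ≥ finrank k V := by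
        have := LinearMap.finrank_range_add_finrank_ker χ
        have hr : finrank k (LinearMap.range χ) ≤ 1 := by
          have := Submodule.finrank_le (LinearMap.range χ)
          simpa using this
        omega
      have h5 := Submodule.finrank_sup_add_finrank_inf_eq (LinearMap.ker φ₀) (LinearMap.ker χ)
      have h6 := Submodule.finrank_le (LinearMap.ker φ₀ ⊔ LinearMap.ker χ)
      rw [← hR] at h5
      have h7 : finrank k R + 2 ≥ finrank k V := by omega
      omega
    · -- membership
      intro ψ hψ
      rw [Submodule.mem_dualAnnihilator]
      intro u hu
      rw [hR, Submodule.mem_inf] at hu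
      obtain ⟨hu1, hu2⟩ := hu
      rw [LinearMap.mem_ker] at hu1 hu2
      by_contra hψu
      apply hf
      apply fzero β hfull
      intro x y
      have hx' : ψ (x - (ψ x / ψ u) • u) = 0 := by
        rw [map_sub, map_smul, smul_eq_mul]
        field_simp
        ring
      have hy' : ψ (y - (ψ y / ψ u) • u) = 0 := by
        rw [map_sub, map_smul, smul_eq_mul]
        field_simp
        ring
      have hdecomp : β x y =
          β (x - (ψ x / ψ u) • u) (y - (ψ y / ψ u) • u)
          + (ψ y / ψ u) • β (x - (ψ x / ψ u) • u) u
          + (ψ x / ψ u) • β u (y - (ψ y / ψ u) • u)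
          + ((ψ y / ψ u) * (ψ x / ψ u)) • β u u := by
        set cx := ψ x / ψ u
        set cy := ψ y / ψ u
        have hxs : x = (x - cx • u) + cx • u := by abel
        have hys : y = (y - cy • u) + cy • u := by abel
        calc β x y = β ((x - cx • u) + cx • u) ((y - cy • u) + cy • u) := by
              rw [← hxs, ← hys]
          _ = _ := by
              simp only [map_add, map_smul, LinearMap.add_apply, LinearMap.smul_apply,
                smul_smul, smul_add]
              abel
      rw [hdecomp, map_add, map_add, map_add, map_smul, map_smul, map_smul]
      have t1 : f (β (x - (ψ x / ψ u) • u) (y - (ψ y / ψ u) • u)) = 0 := hψ _ _ hx' hy'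
      have t2 : f (β (x - (ψ x / ψ u) • u) u) = 0 := by
        rw [hsymm]
        exact claim1 u hu1 hu2 _
      have t3 : f (β u (y - (ψ y / ψ u) • u)) = 0 := claim1 u hu1 hu2 _
      have t4 : f (β u u) = 0 := claim1 u hu1 hu2 u
      rw [t1, t2, t3, t4]
      simp

end


section
variable {k V W : Type*} [Field k] [AddCommGroup V] [Module k V]
  [AddCommGroup W] [Module k W] [FiniteDimensional k V] [FiniteDimensional k W]

lemma finite_case [Finite k]
    (β : V →ₗ[k] V →ₗ[k] W) (hsymm : ∀ x y : V, β x y = β y x)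
    (hfull : Submodule.span k (Set.image2 (fun u v => β u v) (Set.univ : Set V) Set.univ) = ⊤)
    (hmin : ∀ U : Submodule k V, U ≠ ⊤ →
      Submodule.span k (Set.image2 (fun u v => β u v) (U : Set V) (U : Set V)) ≠ ⊤) :
    Module.finrank k V ≤ Module.finrank k W + 1 := by
  classical
  by_contra hlt
  push_neg at hlt
  set n := finrank k V with hn
  set m := finrank k W with hm
  haveI : Fintype k := Fintype.ofFinite k
  haveI : Finite V := Module.finite_of_finite k
  haveI : Finite (Module.Dual k V) := Module.finite_of_finite k
  haveI : Finite (Module.Dual k W) := Module.finite_of_finite k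
  haveI : Fintype (Module.Dual k V) := Fintype.ofFinite _
  haveI : Fintype (Module.Dual k W) := Fintype.ofFinite _
  set q := Fintype.card k with hq
  have hq2 : 2 ≤ q := Fintype.one_lt_card
  have hcardV : Fintype.card (Module.Dual k V) = q ^ n := by
    rw [card_eq_pow_finrank (K := k), Subspace.dual_finrank_eq]
  have hcardW : Fintype.card (Module.Dual k W) = q ^ m := by
    rw [card_eq_pow_finrank (K := k), Subspace.dual_finrank_eq]
  -- choice of f for each nonzero φ
  have spec : ∀ φ : Module.Dual k V, φ ≠ 0 → ∃ f : Module.Dual k W, f ≠ 0 ∧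
      ∀ x y : V, φ x = 0 → φ y = 0 → f (β x y) = 0 := by
    intro φ hφ
    have hker : LinearMap.ker φ ≠ ⊤ := by
      intro h
      exact hφ (LinearMap.ker_eq_top.mp h)
    have hSig := hmin (LinearMap.ker φ) hker
    obtain ⟨f, hf0, hfmap⟩ :=
      Submodule.exists_dual_map_eq_bot_of_lt_top (lt_top_iff_ne_top.mpr hSig) inferInstance
    refine ⟨f, hf0, fun x y hx hy => ?_⟩
    have hmem : β x y ∈ Submodule.span k (Set.image2 (fun u v => β u v)
        ((LinearMap.ker φ : Submodule k V) : Set V) ((LinearMap.ker φ : Submodule k V) : Set V)) :=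
      Submodule.subset_span (Set.mem_image2_of_mem hx hy)
    have : f (β x y) ∈ Submodule.map f (Submodule.span k (Set.image2 (fun u v => β u v)
        ((LinearMap.ker φ : Submodule k V) : Set V)
        ((LinearMap.ker φ : Submodule k V) : Set V))) := ⟨β x y, hmem, rfl⟩
    rw [hfmap] at this
    exact (Submodule.mem_bot k).mp this
  set F : Module.Dual k V → Module.Dual k W :=
    fun φ => if h : φ ≠ 0 then (spec φ h).choose else 0 with hF
  have hFne : ∀ φ : Module.Dual k V, φ ≠ 0 → F φ ≠ 0 := by
    intro φ hφ
    rw [hF]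
    simp only [hφ, dif_pos, ne_eq]
    exact (spec φ hφ).choose_spec.1
  have hFvan : ∀ φ : Module.Dual k V, (h : φ ≠ 0) →
      ∀ x y : V, φ x = 0 → φ y = 0 → (F φ) (β x y) = 0 := by
    intro φ hφ
    rw [hF]
    simp only [hφ, dif_pos, ne_eq]
    exact (spec φ hφ).choose_spec.2
  set s : Finset (Module.Dual k V) := Finset.univ.erase 0 with hs
  set t : Finset (Module.Dual k W) := Finset.univ.erase 0 with ht
  have hmapsto : ∀ φ ∈ s, F φ ∈ t := by
    intro φ hφ
    have : φ ≠ 0 := Finset.ne_of_mem_erase hφ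
    exact Finset.mem_erase.mpr ⟨hFne φ this, Finset.mem_univ _⟩
  have hfiber : ∀ f ∈ t, (s.filter fun φ => F φ = f).card ≤ q ^ 2 := by
    intro f hft
    have hf0 : f ≠ 0 := Finset.ne_of_mem_erase hft
    obtain ⟨S, hS2, hSmem⟩ := Abound β hsymm hfull f hf0
    have hsub : (s.filter fun φ => F φ = f) ⊆ (S : Set (Module.Dual k V)).toFinset := by
      intro φ hφ
      rw [Finset.mem_filter] at hφ
      obtain ⟨hφs, hφF⟩ := hφ
      have hφ0 : φ ≠ 0 := Finset.ne_of_mem_erase hφs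
      rw [Set.mem_toFinset]
      apply hSmem
      intro x y hx hy
      rw [← hφF]
      exact hFvan φ hφ0 x y hx hy
    calc (s.filter fun φ => F φ = f).card ≤ (S : Set (Module.Dual k V)).toFinset.card :=
          Finset.card_le_card hsub
      _ = Fintype.card ↥S := by rw [Set.toFinset_card]; rfl
      _ = q ^ finrank k S := by convert Module.card_eq_pow_finrank (K := k) (V := ↥S)
      _ ≤ q ^ 2 := Nat.pow_le_pow_right (by omega) hS2
  have hcount := Finset.card_le_mul_card_image_of_maps_to hmapsto (q ^ 2) hfiber
  have hscard : s.card = q ^ n - 1 := by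
    rw [hs, Finset.card_erase_of_mem (Finset.mem_univ _), Finset.card_univ, hcardV]
  have htcard : t.card = q ^ m - 1 := by
    rw [ht, Finset.card_erase_of_mem (Finset.mem_univ _), Finset.card_univ, hcardW]
  -- arithmetic contradiction
  have hmain : q ^ n - 1 ≤ q ^ 2 * (q ^ m - 1) := by
    calc q ^ n - 1 = s.card := hscard.symm
      _ ≤ q ^ 2 * t.card := hcount
      _ = q ^ 2 * (q ^ m - 1) := by rw [htcard]
  have e1 : q ^ 2 * q ^ m ≤ q ^ n := by
    rw [← pow_add]
    exact Nat.pow_le_pow_right (by omega) (by omega)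
  have e3 : 1 ≤ q ^ m := Nat.one_le_pow _ _ (by omega)
  have e4 : 4 ≤ q ^ 2 := by
    calc 4 = 2 ^ 2 := by norm_num
    _ ≤ q ^ 2 := Nat.pow_le_pow_left hq2 2
  have e5 : q ^ 2 * (q ^ m - 1) + q ^ 2 = q ^ 2 * q ^ m := by
    obtain ⟨tt, htt⟩ := Nat.exists_eq_add_of_le e3
    rw [htt, Nat.add_sub_cancel_left]
    ring
  have e6 : 1 ≤ q ^ n := Nat.one_le_pow _ _ (by omega)
  generalize hP1 : q ^ 2 * (q ^ m - 1) = P1 at hmain e5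
  generalize hP2 : q ^ 2 * q ^ m = P2 at e5 e1
  generalize hA : q ^ n = A at hmain e1 e6
  generalize hQ : q ^ 2 = Q2 at e4 e5
  omega


lemma infinite_case (k V W : Type) [Field k] [Infinite k] [AddCommGroup V] [Module k V]
    [AddCommGroup W] [Module k W] [FiniteDimensional k V] [FiniteDimensional k W]
    (β : V →ₗ[k] V →ₗ[k] W) (hsymm : ∀ x y : V, β x y = β y x)
    (hfull : Submodule.span k (Set.image2 (fun u v => β u v) (Set.univ : Set V) Set.univ) = ⊤)
    (hmin : ∀ U : Submodule k V, U ≠ ⊤ →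
      Submodule.span k (Set.image2 (fun u v => β u v) (U : Set V) (U : Set V)) ≠ ⊤) :
    Module.finrank k V ≤ Module.finrank k W + 1 := by
  by_contra hlt
  push_neg at hlt
  set n := finrank k V with hn
  set m := finrank k W with hm
  -- choose v maximizing the rank of β v
  have hbdd : BddAbove (Set.range (fun w : V => finrank k (LinearMap.range (β w)))) :=
    ⟨m, by rintro d ⟨w, rfl⟩; exact Submodule.finrank_le _⟩
  have hmem := Nat.sSup_mem (Set.range_nonempty _) hbdd
  obtain ⟨v, hv⟩ := hmem
  have hmax : ∀ w : V, finrank k (LinearMap.range (β w)) ≤ finrank k (LinearMap.range (β v)) := by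
    intro w
    exact (le_csSup hbdd ⟨w, rfl⟩).trans_eq hv.symm
  set Kv := LinearMap.ker (β v) with hKv
  set rad := Kv ⊔ Submodule.span k {v} with hrad
  obtain ⟨Y, hY⟩ := Submodule.exists_isCompl rad
  set Ustar := Y ⊔ Submodule.span k {v} with hUstar
  -- dimension count
  have hd1 : finrank k (LinearMap.range (β v)) + finrank k Kv = n :=
    LinearMap.finrank_range_add_finrank_ker (β v)
  have hd2 : finrank k Kv ≤ finrank k rad := Submodule.finrank_mono le_sup_left
  have hd3 : finrank k rad + finrank k Y = n := Submodule.finrank_add_eq_of_isCompl hY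
  have hd4 : finrank k (Submodule.span k ({v} : Set V)) ≤ 1 := by
    rcases eq_or_ne v 0 with h | h
    · subst h
      rw [Submodule.span_zero_singleton]
      simp [finrank_bot]
    · rw [finrank_span_singleton h]
  have hd5 : finrank k Ustar ≤ finrank k Y + finrank k (Submodule.span k ({v} : Set V)) := by
    have := Submodule.finrank_sup_add_finrank_inf_eq Y (Submodule.span k {v})
    rw [← hUstar] at this
    omega
  have hd6 : finrank k (LinearMap.range (β v)) ≤ m := Submodule.finrank_le _
  have hdim : finrank k Ustar ≤ m + 1 := by omega
  have hne : Ustar ≠ ⊤ := by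
    intro h
    rw [h, finrank_top] at hdim
    omega
  -- Ustar spans
  set P := Submodule.span k (Set.image2 (fun u v => β u v) (Ustar : Set V) (Ustar : Set V))
    with hP
  have mem1 : ∀ a b : V, a ∈ Ustar → b ∈ Ustar → β a b ∈ P :=
    fun a b ha hb => Submodule.subset_span (Set.mem_image2_of_mem ha hb)
  have hvU : v ∈ Ustar := Submodule.mem_sup_right (Submodule.mem_span_singleton_self v)
  have hYU : Y ≤ Ustar := le_sup_left
  have hIP : ∀ w ∈ LinearMap.range (β v), w ∈ P := by
    rintro _ ⟨uu, rfl⟩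
    have huu : uu ∈ rad ⊔ Y := by rw [hY.sup_eq_top]; trivial
    obtain ⟨ρ, hρ, y, hy, rfl⟩ := Submodule.mem_sup.mp huu
    obtain ⟨zz, hzz, sv, hsv, rfl⟩ := Submodule.mem_sup.mp hρ
    obtain ⟨c, rfl⟩ := Submodule.mem_span_singleton.mp hsv
    have : (β v) (zz + c • v + y) = (β v) zz + c • (β v) v + (β v) y := by
      rw [map_add, map_add, map_smul]
    rw [this]
    have hz0 : (β v) zz = 0 := hzz
    rw [hz0, zero_add]
    exact P.add_mem (P.smul_mem c (mem1 v v hvU hvU)) (mem1 v y hvU (hYU hy))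
  have hradI : ∀ ρ ∈ rad, ∀ w : V, β ρ w ∈ LinearMap.range (β v) := by
    intro ρ hρ w
    obtain ⟨zz, hzz, sv, hsv, rfl⟩ := Submodule.mem_sup.mp hρ
    obtain ⟨c, rfl⟩ := Submodule.mem_span_singleton.mp hsv
    have : β (zz + c • v) w = β zz w + c • β v w := by
      rw [map_add, map_smul]
      simp
    rw [this]
    refine Submodule.add_mem _ ?_ (Submodule.smul_mem _ c ⟨w, rfl⟩)
    rw [hsymm zz w]
    exact perturb β v hmax hzz w
  have hspan : P = ⊤ := by
    rw [eq_top_iff, ← hfull, Submodule.span_le]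
    rintro _ ⟨xx, -, yy, -, rfl⟩
    have hxx : xx ∈ rad ⊔ Y := by rw [hY.sup_eq_top]; trivial
    have hyy : yy ∈ rad ⊔ Y := by rw [hY.sup_eq_top]; trivial
    obtain ⟨ρx, hρx, yx, hyx, rfl⟩ := Submodule.mem_sup.mp hxx
    obtain ⟨ρy, hρy, yy2, hyy2, rfl⟩ := Submodule.mem_sup.mp hyy
    rw [SetLike.mem_coe]
    show β (ρx + yx) (ρy + yy2) ∈ P
    have hsplit : β (ρx + yx) (ρy + yy2)
        = β ρx (ρy + yy2) + β yx ρy + β yx yy2 := by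
      rw [map_add]
      simp only [LinearMap.add_apply, map_add]
      abel
    rw [hsplit]
    refine P.add_mem (P.add_mem ?_ ?_) (mem1 yx yy2 (hYU hyx) (hYU hyy2))
    · exact hIP _ (hradI ρx hρx _)
    · rw [hsymm yx ρy]
      exact hIP _ (hradI ρy hρy yx)
  exact hmin Ustar hne hspan

/-- Let `β : V × V → W` be a symmetric bilinear map between finite-dimensional
`k`-vector spaces such that the span of `β(V × V)` is all of `W`, but the span of
`β(U × U)` is not all of `W` for any proper subspace `U ⊊ V`.
Then `dim V ≤ dim W + 1`. -/
theorem stmt15 (k : Type) [Field k] (V W : Type) [AddCommGroup V] [Module k V]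
    [AddCommGroup W] [Module k W] [FiniteDimensional k V] [FiniteDimensional k W]
    (β : V →ₗ[k] V →ₗ[k] W) (hsymm : ∀ x y : V, β x y = β y x)
    (hfull : Submodule.span k (Set.image2 (fun u v => β u v) (Set.univ : Set V) Set.univ) = ⊤)
    (hmin : ∀ U : Submodule k V, U ≠ ⊤ →
      Submodule.span k (Set.image2 (fun u v => β u v) (U : Set V) (U : Set V)) ≠ ⊤) :
    Module.finrank k V ≤ Module.finrank k W + 1 := by
  rcases finite_or_infinite k with hk | hk
  · exact finite_case β hsymm hfull hmin
  · exact infinite_case k V W β hsymm hfull hmin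
end
end
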